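/- arXiv:2105.00887 — 3 statements merged into one kernel-verified Lean document; each statement's English description precedes it below -/
import Mathlib

section
/- For u : {0, 1, ..., N} → ℝ^d with u_0 = u_N = 0 and h = T/N, the discrete Poincaré inequality holds: (1/h) Σ_{k=0}^{N−1} ‖u_{k+1} − u_k‖² ≥ (π²/T²)(sin(π/(2N))/(π/(2N)))² Σ_{k=1}^{N−1} h‖u_k‖² ≥ (2π²/(5T²)) Σ_{k=1}^{N−1} h‖u_k‖². -/
/-!
The sequence `v k = sin (k π / N)` is a positive Dirichlet eigenvector of the discrete
Laplacian: `2 v k - v (k - 1) - v (k + 1) = 4 sin² (π / (2N)) v k`. Writing `u k = v k • w k`,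
the discrete Picone inequality bounds each `‖u (k+1) - u k‖²` below by
`(v (k+1) - v k) (v (k+1) ‖w (k+1)‖² - v k ‖w k‖²)`; summing by parts turns the total into
`4 sin² (π / (2N)) ∑ ‖u k‖²`. The constant `2/5` comes from Jordan's inequality
`sin x ≥ 2x/π` on `[0, π/2]` and `π² ≤ 10`.
-/

open Finset Real

theorem sub_mul_sub_le_norm_smul_sub_smul_sq {E : Type*} [NormedAddCommGroup E]
    [InnerProductSpace ℝ E] {a b : ℝ} (ha : 0 ≤ a) (hb : 0 ≤ b) (x y : E) :
    (b - a) * (b * ‖y‖ ^ 2 - a * ‖x‖ ^ 2) ≤ ‖b • y - a • x‖ ^ 2 := by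
  have key : ‖b • y - a • x‖ ^ 2 =
      (b - a) * (b * ‖y‖ ^ 2 - a * ‖x‖ ^ 2) + a * b * ‖y - x‖ ^ 2 := by
    rw [norm_sub_sq_real, norm_sub_sq_real, norm_smul, norm_smul, real_inner_smul_left,
      real_inner_smul_right, Real.norm_of_nonneg ha, Real.norm_of_nonneg hb]
    ring
  rw [key]
  exact le_add_of_nonneg_right (by positivity)

theorem sum_range_sub_mul_sub_eq {N : ℕ} (v q : ℕ → ℝ) (hq0 : q 0 = 0) (hqN : q N = 0) :
    ∑ k ∈ range N, (v (k + 1) - v k) * (q (k + 1) - q k) =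
      ∑ k ∈ range N, (2 * v k - v (k - 1) - v (k + 1)) * q k := by
  have shift : ∑ k ∈ range N, (v (k + 1) - v k) * q (k + 1) =
      ∑ k ∈ range N, (v k - v (k - 1)) * q k := by
    have := sum_range_succ' (fun k => (v k - v (k - 1)) * q k) N
    rw [sum_range_succ, hqN, hq0] at this
    simpa using this.symm
  calc ∑ k ∈ range N, (v (k + 1) - v k) * (q (k + 1) - q k)
      = ∑ k ∈ range N, (v (k + 1) - v k) * q (k + 1) -
          ∑ k ∈ range N, (v (k + 1) - v k) * q k := by
        rw [← sum_sub_distrib]; simp only [mul_sub]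
    _ = ∑ k ∈ range N, (2 * v k - v (k - 1) - v (k + 1)) * q k := by
        rw [shift, ← sum_sub_distrib]; congr 1 with k; ring

theorem two_mul_sin_sub_sin_sub_sin_add (x θ : ℝ) :
    2 * sin x - sin (x - θ) - sin (x + θ) = 4 * sin (θ / 2) ^ 2 * sin x := by
  have hcos : cos θ = 1 - 2 * sin (θ / 2) ^ 2 := by
    rw [show (1 : ℝ) - 2 * sin (θ / 2) ^ 2 = 2 * (1 - sin (θ / 2) ^ 2) - 1 by ring,
      ← cos_sq', ← cos_two_mul, mul_div_cancel₀ θ two_ne_zero]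
  rw [sin_sub, sin_add, hcos]
  ring

theorem four_mul_sin_sq_mul_sum_norm_sq_le {E : Type*} [NormedAddCommGroup E]
    [InnerProductSpace ℝ E] {N : ℕ} {u : ℕ → E} (hu0 : u 0 = 0) (huN : u N = 0) :
    4 * sin (π / (2 * N)) ^ 2 * ∑ k ∈ Ioo 0 N, ‖u k‖ ^ 2 ≤
      ∑ k ∈ range N, ‖u (k + 1) - u k‖ ^ 2 := by
  set v : ℕ → ℝ := fun k => sin (k * π / N)
  set w : ℕ → E := fun k => (v k)⁻¹ • u k
  set q : ℕ → ℝ := fun k => v k * ‖w k‖ ^ 2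
  have hv_nonneg : ∀ k ≤ N, 0 ≤ v k := fun k hk => by
    refine sin_nonneg_of_nonneg_of_le_pi (by positivity) ?_
    rw [mul_div_right_comm]
    exact mul_le_of_le_one_left pi_pos.le
      (div_le_one_of_le₀ (by exact_mod_cast hk) (by positivity))
  have hv_pos : ∀ k ∈ Ioo 0 N, 0 < v k := fun k hk => by
    obtain ⟨hk0, hkN⟩ : (0 : ℝ) < k ∧ (k : ℝ) < N := by
      exact_mod_cast mem_Ioo.mp hk
    refine sin_pos_of_pos_of_lt_pi (div_pos (mul_pos hk0 pi_pos) (hk0.trans hkN)) ?_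
    rw [mul_div_right_comm]
    exact mul_lt_of_lt_one_left pi_pos ((div_lt_one (hk0.trans hkN)).mpr hkN)
  have hu : ∀ k ≤ N, u k = v k • w k := fun k hk => by
    by_cases hk' : k = 0 ∨ k = N
    · rcases hk' with rfl | rfl <;> simp [w, hu0, huN]
    · exact (smul_inv_smul₀ (hv_pos k (by simp; omega)).ne' (u k)).symm
  have hv_eigen : ∀ k ∈ Ioo 0 N,
      2 * v k - v (k - 1) - v (k + 1) = 4 * sin (π / (2 * N)) ^ 2 * v k := fun k hk => by
    have hk1 : ((k - 1 : ℕ) : ℝ) = k - 1 := Nat.cast_pred (mem_Ioo.mp hk).1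
    simp only [v, hk1, Nat.cast_succ]
    rw [sub_mul, add_mul, sub_div, add_div, one_mul, div_mul_eq_div_div_swap]
    exact two_mul_sin_sub_sin_sub_sin_add _ _
  calc 4 * sin (π / (2 * N)) ^ 2 * ∑ k ∈ Ioo 0 N, ‖u k‖ ^ 2
      = ∑ k ∈ Ioo 0 N, (2 * v k - v (k - 1) - v (k + 1)) * q k := by
        rw [mul_sum]
        refine sum_congr rfl fun k hk => ?_
        rw [hv_eigen k hk, hu k (mem_Ioo.mp hk).2.le, norm_smul,
          Real.norm_of_nonneg (hv_pos k hk).le]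
        ring
    _ = ∑ k ∈ range N, (2 * v k - v (k - 1) - v (k + 1)) * q k := by
        refine sum_subset (fun k hk => mem_range.mpr (mem_Ioo.mp hk).2) fun k hk hk' => ?_
        have : k = 0 := by simp at hk hk'; omega
        simp [this, q, w, hu0]
    _ = ∑ k ∈ range N, (v (k + 1) - v k) * (q (k + 1) - q k) :=
        (sum_range_sub_mul_sub_eq v q (by simp [q, w, hu0]) (by simp [q, w, huN])).symm
    _ ≤ ∑ k ∈ range N, ‖u (k + 1) - u k‖ ^ 2 := sum_le_sum fun k hk => by
        have hk := mem_range.mp hk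
        rw [hu k hk.le, hu (k + 1) hk]
        exact sub_mul_sub_le_norm_smul_sub_smul_sq (hv_nonneg k hk.le) (hv_nonneg (k + 1) hk) _ _

theorem two_div_five_le_sin_div_sq {x : ℝ} (hx0 : 0 < x) (hx : x ≤ π / 2) :
    2 / 5 ≤ (sin x / x) ^ 2 := by
  have jordan : 2 / π ≤ sin x / x := (le_div_iff₀ hx0).mpr (mul_le_sin hx0.le hx)
  have pi_sq_le : π ^ 2 ≤ 10 := by nlinarith [pi_lt_d2, pi_pos]
  calc (2 : ℝ) / 5 ≤ (2 / π) ^ 2 := by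
        rw [div_pow, le_div_iff₀ (by positivity)]; nlinarith
    _ ≤ (sin x / x) ^ 2 := pow_le_pow_left₀ (by positivity) jordan 2

/-- Discrete Poincaré inequality with Dirichlet boundary conditions on the grid
`{0, h, …, Nh}`, together with the uniform lower bound `(sin x / x)² ≥ 2/5`. -/
theorem discrete_poincare {d : ℕ} (T : ℝ) (N : ℕ) (h : ℝ)
    (hT : 0 < T) (hN : 0 < N) (hh : h = T / N)
    (u : ℕ → EuclideanSpace ℝ (Fin d)) (hu0 : u 0 = 0) (huN : u N = 0) :
    (π^2 / T^2) * (Real.sin (π / (2 * N)) / (π / (2 * N)))^2 *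
        ∑ k ∈ Finset.Ioo 0 N, h * ‖u k‖^2 ≤
      (1 / h) * ∑ k ∈ Finset.range N, ‖u (k+1) - u k‖^2 ∧
    (2 * π^2 / (5 * T^2)) * ∑ k ∈ Finset.Ioo 0 N, h * ‖u k‖^2 ≤
      (π^2 / T^2) * (Real.sin (π / (2 * N)) / (π / (2 * N)))^2 *
        ∑ k ∈ Finset.Ioo 0 N, h * ‖u k‖^2 := by
  have hh0 : 0 ≤ h := by rw [hh]; positivity
  have hspectral := four_mul_sin_sq_mul_sum_norm_sq_le hu0 huN
  have hsinc := two_div_five_le_sin_div_sq (x := π / (2 * N)) (by positivity)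
    (by gcongr; linarith [show (1 : ℝ) ≤ N by exact_mod_cast hN])
  rw [← mul_sum]
  set S := ∑ k ∈ Ioo 0 N, ‖u k‖ ^ 2
  set D := ∑ k ∈ range N, ‖u (k + 1) - u k‖ ^ 2
  constructor
  · calc (π ^ 2 / T ^ 2) * (sin (π / (2 * N)) / (π / (2 * N))) ^ 2 * (h * S)
        = N / T * (4 * sin (π / (2 * N)) ^ 2 * S) := by rw [hh]; field_simp; ring
      _ ≤ N / T * D := by gcongr
      _ = 1 / h * D := by rw [hh, one_div_div]
  · calc 2 * π ^ 2 / (5 * T ^ 2) * (h * S) = π ^ 2 / T ^ 2 * (2 / 5) * (h * S) := by ring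
      _ ≤ _ := by gcongr
end

section
/- Let U ∈ C²(ℝ^d) with ‖D²U‖ ≤ L, and suppose L(T² + Th) ≤ 1/6 and T/h ∈ ℕ. Then the derivative of the Verlet flow with respect to initial velocity satisfies max_{s ≤ T} ‖D₂q̃_s(x,v)‖ ≤ (6/5)T and max_{s ≤ T} ‖D₂ṽ_s(x,v)‖ ≤ 6/5 for all x, v ∈ ℝ^d. -/
/-!
On a grid cell `[k h, k h + h]` the interpolation is explicit: the position is quadratic and the
velocity affine in time. Differentiating in `v` gives the one-step recursions
`Dq(kh+σ) = Dq(kh) + σ Dw(kh) - σ²/2 H Dq(kh)` and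
`Dw(kh+σ) = Dw(kh) - σ/2 (H Dq(kh) + H' Dq(kh+h))` with `‖H‖, ‖H'‖ ≤ L`.
Taking norms, an induction over the grid propagates `‖Dq(kh)‖ ≤ 6/5 kh` together with
`‖Dw(kh)‖ ≤ 1 + 3/5 L ((kh)² + kh h)`, and `L (T² + T h) ≤ 1/6` keeps both below the claimed bounds.
-/

open MeasureTheory intervalIntegral

noncomputable def gridFloor (h t : ℝ) : ℝ := h * ⌊t / h⌋
noncomputable def gridCeil (h t : ℝ) : ℝ := h * ⌈t / h⌉

open Set

section Grid

variable {h u : ℝ} {k : ℕ}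

lemma gridFloor_eq_of_mem_Ioo (hh : 0 < h) (hu : u ∈ Ioo (k * h) (k * h + h)) :
    gridFloor h u = k * h := by
  have : ⌊u / h⌋ = k := by
    rw [Int.floor_eq_iff, le_div_iff₀ hh, div_lt_iff₀ hh]
    push_cast
    constructor <;> linarith [hu.1, hu.2]
  rw [gridFloor, this, mul_comm]
  norm_cast

lemma gridCeil_eq_of_mem_Ioo (hh : 0 < h) (hu : u ∈ Ioo (k * h) (k * h + h)) :
    gridCeil h u = k * h + h := by
  have : ⌈u / h⌉ = k + 1 := by
    rw [Int.ceil_eq_iff, lt_div_iff₀ hh, div_le_iff₀ hh]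
    push_cast
    constructor <;> linarith [hu.1, hu.2]
  rw [gridCeil, this]
  push_cast
  ring

lemma exists_nat_mul_add_of_nonneg (hh : 0 < h) (hu : 0 ≤ u) :
    ∃ k : ℕ, ∃ σ ∈ Ico 0 h, u = k * h + σ := by
  refine ⟨⌊u / h⌋₊, u - ⌊u / h⌋₊ * h, ⟨?_, ?_⟩, by ring⟩
  · have := Nat.floor_le (div_nonneg hu hh.le)
    rw [le_div_iff₀ hh] at this
    linarith
  · have := Nat.lt_floor_add_one (u / h)
    rw [div_lt_iff₀ hh] at this
    linarith

end Grid

section CellIntegral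

variable {E : Type*} [NormedAddCommGroup E] {h σ : ℝ} {f : ℝ → E} {g : ℕ → ℝ → E}

lemma intervalIntegrable_cell (hg : ∀ k, Continuous (g k))
    (hfg : ∀ k : ℕ, EqOn f (g k) (Ioo (k * h) (k * h + h))) (k : ℕ) (hσ : σ ∈ Icc 0 h) :
    IntervalIntegrable f volume (k * h) (k * h + σ) :=
  ((hg k).intervalIntegrable _ _).congr_uIoo fun u hu ↦ by
    rw [uIoo_of_le (by linarith [hσ.1])] at hu
    exact (hfg k ⟨hu.1, by linarith [hu.2, hσ.2]⟩).symm

lemma intervalIntegrable_zero_nat_mul (hh : 0 ≤ h) (hg : ∀ k, Continuous (g k))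
    (hfg : ∀ k : ℕ, EqOn f (g k) (Ioo (k * h) (k * h + h))) (k : ℕ) :
    IntervalIntegrable f volume 0 (k * h) := by
  induction k with
  | zero => simp
  | succ k ih =>
    rw [Nat.cast_succ, add_one_mul]
    exact ih.trans (intervalIntegrable_cell hg hfg k ⟨hh, le_rfl⟩)

variable [NormedSpace ℝ E]

lemma integral_zero_nat_mul_add (hh : 0 ≤ h) (hg : ∀ k, Continuous (g k))
    (hfg : ∀ k : ℕ, EqOn f (g k) (Ioo (k * h) (k * h + h))) (k : ℕ) (hσ : σ ∈ Icc 0 h) :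
    ∫ u in 0..k * h + σ, f u = (∫ u in 0..k * h, f u) + ∫ u in k * h..k * h + σ, g k u := by
  rw [← integral_add_adjacent_intervals (intervalIntegrable_zero_nat_mul hh hg hfg k)
    (intervalIntegrable_cell hg hfg k hσ)]
  congr 1
  exact integral_congr_Ioo_of_le (by linarith [hσ.1]) fun u hu ↦
    hfg k ⟨hu.1, by linarith [hu.2, hσ.2]⟩

variable [CompleteSpace E]

lemma integral_gridFloor_affine (hh : 0 < h) (a b : ℝ → E) (k : ℕ) (hσ : σ ∈ Icc 0 h) :
    ∫ s in 0..k * h + σ, (a (gridFloor h s) - (s - gridFloor h s) • b (gridFloor h s)) =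
      (∫ s in 0..k * h, (a (gridFloor h s) - (s - gridFloor h s) • b (gridFloor h s))) +
        (σ • a (k * h) - (σ ^ 2 / 2) • b (k * h)) := by
  rw [integral_zero_nat_mul_add hh.le (g := fun k s ↦ a (k * h) - (s - k * h) • b (k * h))
    (fun k ↦ by fun_prop) (fun k u hu ↦ by simp only [gridFloor_eq_of_mem_Ioo hh hu]) k hσ]
  congr 1
  have hlin : Continuous fun s : ℝ ↦ s • b (k * h) := by fun_prop
  rw [integral_comp_sub_right (fun s ↦ a (k * h) - s • b (k * h)), add_sub_cancel_left,
    sub_self, integral_sub intervalIntegrable_const (hlin.intervalIntegrable _ _),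
    intervalIntegral.integral_const, intervalIntegral.integral_smul_const, integral_id, sub_zero]
  norm_num

lemma integral_gridFloor_add_gridCeil (hh : 0 < h) (c : ℝ → E) (k : ℕ) (hσ : σ ∈ Icc 0 h) :
    ∫ s in 0..k * h + σ, (c (gridFloor h s) + c (gridCeil h s)) =
      (∫ s in 0..k * h, (c (gridFloor h s) + c (gridCeil h s))) +
        σ • (c (k * h) + c (k * h + h)) := by
  rw [integral_zero_nat_mul_add hh.le (g := fun k _ ↦ c (k * h) + c (k * h + h))
    (fun k ↦ by fun_prop)
    (fun k u hu ↦ by simp only [gridFloor_eq_of_mem_Ioo hh hu, gridCeil_eq_of_mem_Ioo hh hu])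
    k hσ, intervalIntegral.integral_const, add_sub_cancel_left]

end CellIntegral

section VerletStep

variable {E : Type*} [NormedAddCommGroup E] [NormedSpace ℝ E] [CompleteSpace E] {h σ : ℝ}
  {x v : E} {q w : ℝ → E} {G : E → E}

lemma verlet_position_step (hh : 0 < h)
    (hq : ∀ t, q t = x + ∫ s in (0:ℝ)..t,
      (w (gridFloor h s) - (s - gridFloor h s) • G (q (gridFloor h s))))
    (k : ℕ) (hσ : σ ∈ Icc 0 h) :
    q (k * h + σ) = q (k * h) + (σ • w (k * h) - (σ ^ 2 / 2) • G (q (k * h))) := by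
  rw [hq (k * h + σ), integral_gridFloor_affine hh w (fun t ↦ G (q t)) k hσ, ← add_assoc, ← hq]

lemma verlet_velocity_step (hh : 0 < h)
    (hw : ∀ t, w t = v - (1/2 : ℝ) • ∫ s in (0:ℝ)..t,
      (G (q (gridFloor h s)) + G (q (gridCeil h s))))
    (k : ℕ) (hσ : σ ∈ Icc 0 h) :
    w (k * h + σ) = w (k * h) - (σ / 2) • (G (q (k * h)) + G (q (k * h + h))) := by
  rw [hw (k * h + σ), integral_gridFloor_add_gridCeil hh (fun t ↦ G (q t)) k hσ, smul_add,
    ← sub_sub, ← hw, smul_smul, one_div_mul_eq_div]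

end VerletStep

section DerivativeStep

variable {E F : Type*} [NormedAddCommGroup E] [NormedSpace ℝ E] [NormedAddCommGroup F]
  [NormedSpace ℝ F] {G : E → E} {v : F} {σ : ℝ}

lemma derivative_eq_of_position_step {Q Q' W : F → E} {A A' B : F →L[ℝ] E} {H : E →L[ℝ] E}
    (hG : HasFDerivAt G H (Q v)) (hQ : HasFDerivAt Q A v) (hQ' : HasFDerivAt Q' A' v)
    (hW : HasFDerivAt W B v) (hstep : ∀ u, Q' u = Q u + (σ • W u - (σ ^ 2 / 2) • G (Q u))) :
    A' = A + σ • B - (σ ^ 2 / 2) • H.comp A := by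
  refine hQ'.unique ?_
  rw [funext hstep, add_sub_assoc]
  exact hQ.add ((hW.const_smul σ).sub ((hG.comp v hQ).const_smul _))

lemma derivative_eq_of_velocity_step {Q₁ Q₂ W W' : F → E} {A₁ A₂ B B' : F →L[ℝ] E}
    {H₁ H₂ : E →L[ℝ] E} (hG₁ : HasFDerivAt G H₁ (Q₁ v)) (hG₂ : HasFDerivAt G H₂ (Q₂ v))
    (hQ₁ : HasFDerivAt Q₁ A₁ v) (hQ₂ : HasFDerivAt Q₂ A₂ v) (hW : HasFDerivAt W B v)
    (hW' : HasFDerivAt W' B' v) (hstep : ∀ u, W' u = W u - (σ / 2) • (G (Q₁ u) + G (Q₂ u))) :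
    B' = B - (σ / 2) • (H₁.comp A₁ + H₂.comp A₂) := by
  refine hW'.unique ?_
  rw [funext hstep]
  exact hW.sub (((hG₁.comp v hQ₁).add (hG₂.comp v hQ₂)).const_smul _)

end DerivativeStep

section OperatorNorm

variable {E F : Type*} [NormedAddCommGroup E] [NormedSpace ℝ E] [NormedAddCommGroup F]
  [NormedSpace ℝ F] {L σ : ℝ}

lemma norm_verlet_position_step_le {A B : E →L[ℝ] F} {H : F →L[ℝ] F} (hH : ‖H‖ ≤ L)
    (hσ : 0 ≤ σ) :
    ‖A + σ • B - (σ ^ 2 / 2) • H.comp A‖ ≤ ‖A‖ + σ * ‖B‖ + σ ^ 2 / 2 * (L * ‖A‖) :=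
  calc ‖A + σ • B - (σ ^ 2 / 2) • H.comp A‖
      ≤ ‖A‖ + ‖σ • B‖ + ‖(σ ^ 2 / 2) • H.comp A‖ := norm_sub_le_of_le (norm_add_le _ _) le_rfl
    _ = ‖A‖ + σ * ‖B‖ + σ ^ 2 / 2 * ‖H.comp A‖ := by
      rw [norm_smul, norm_smul, Real.norm_of_nonneg hσ, Real.norm_of_nonneg (by positivity)]
    _ ≤ ‖A‖ + σ * ‖B‖ + σ ^ 2 / 2 * (L * ‖A‖) := by
      gcongr
      exact (H.opNorm_comp_le A).trans (by gcongr)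

lemma norm_verlet_velocity_step_le {A₁ A₂ B : E →L[ℝ] F} {H₁ H₂ : F →L[ℝ] F} (hH₁ : ‖H₁‖ ≤ L)
    (hH₂ : ‖H₂‖ ≤ L) (hσ : 0 ≤ σ) :
    ‖B - (σ / 2) • (H₁.comp A₁ + H₂.comp A₂)‖ ≤ ‖B‖ + σ / 2 * (L * ‖A₁‖ + L * ‖A₂‖) :=
  calc ‖B - (σ / 2) • (H₁.comp A₁ + H₂.comp A₂)‖
      ≤ ‖B‖ + σ / 2 * (‖H₁.comp A₁‖ + ‖H₂.comp A₂‖) := by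
        refine (norm_sub_le _ _).trans ?_
        rw [norm_smul, Real.norm_of_nonneg (by positivity)]
        gcongr
        exact norm_add_le _ _
    _ ≤ ‖B‖ + σ / 2 * (L * ‖A₁‖ + L * ‖A₂‖) := by
      gcongr
      · exact (H₁.opNorm_comp_le A₁).trans (by gcongr)
      · exact (H₂.opNorm_comp_le A₂).trans (by gcongr)

end OperatorNorm

section DiscreteBounds

variable {L h t p p' v σ : ℝ}

lemma verlet_position_bound_step (hL : 0 ≤ L) (ht : 0 ≤ t) (hsmall : L * (t + h) ^ 2 ≤ 1 / 6)
    (hp : p ≤ 6 / 5 * t) (hv : v ≤ 1 + 3 / 5 * L * (t ^ 2 + t * h)) (hσ : σ ∈ Icc 0 h) :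
    p + σ * v + σ ^ 2 / 2 * (L * p) ≤ 6 / 5 * (t + h) := by
  obtain ⟨hσ0, hσh⟩ := hσ
  have hh : 0 ≤ h := hσ0.trans hσh
  have hσv : σ * v ≤ h * (1 + 3 / 5 * L * (t ^ 2 + t * h)) :=
    (mul_le_mul_of_nonneg_left hv hσ0).trans (by gcongr)
  have hσp : σ ^ 2 / 2 * (L * p) ≤ h ^ 2 / 2 * (L * (6 / 5 * t)) :=
    (mul_le_mul_of_nonneg_left (by gcongr) (by positivity)).trans
      (mul_le_mul_of_nonneg_right (by gcongr) (by positivity))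
  calc p + σ * v + σ ^ 2 / 2 * (L * p)
      ≤ 6 / 5 * t + h * (1 + 3 / 5 * L * (t ^ 2 + t * h)) + h ^ 2 / 2 * (L * (6 / 5 * t)) := by
        linarith
    _ = 6 / 5 * t + h + 3 / 5 * h * (L * (t ^ 2 + 2 * t * h)) := by ring
    _ ≤ 6 / 5 * (t + h) := by nlinarith [mul_nonneg hL (sq_nonneg h)]

lemma verlet_velocity_bound_step (hL : 0 ≤ L) (ht : 0 ≤ t) (hp : p ≤ 6 / 5 * t)
    (hp' : p' ≤ 6 / 5 * (t + h)) (hv : v ≤ 1 + 3 / 5 * L * (t ^ 2 + t * h))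
    (hσ : σ ∈ Icc 0 h) :
    v + σ / 2 * (L * p + L * p') ≤ 1 + 3 / 5 * L * ((t + h) ^ 2 + (t + h) * h) := by
  obtain ⟨hσ0, hσh⟩ := hσ
  have hh : 0 ≤ h := hσ0.trans hσh
  have hσp : σ / 2 * (L * p + L * p') ≤ h / 2 * (L * (6 / 5 * t) + L * (6 / 5 * (t + h))) :=
    (mul_le_mul_of_nonneg_left (by gcongr) (by positivity)).trans
      (mul_le_mul_of_nonneg_right (by gcongr) (by positivity))
  nlinarith [mul_nonneg hL (sq_nonneg h)]

end DiscreteBounds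

def VerletNormRecursion (L h : ℝ) (P V : ℝ → ℝ) : Prop :=
  ∀ k : ℕ, ∀ σ ∈ Icc 0 h,
    P (k * h + σ) ≤ P (k * h) + σ * V (k * h) + σ ^ 2 / 2 * (L * P (k * h)) ∧
      V (k * h + σ) ≤ V (k * h) + σ / 2 * (L * P (k * h) + L * P (k * h + h))

namespace VerletNormRecursion

variable {L h T : ℝ} {P V : ℝ → ℝ}

lemma bound_on_cell (hrec : VerletNormRecursion L h P V) (hL : 0 ≤ L) {k : ℕ}
    (hsmall : L * (k * h + h) ^ 2 ≤ 1 / 6) (hP : P (k * h) ≤ 6 / 5 * (k * h))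
    (hV : V (k * h) ≤ 1 + 3 / 5 * L * ((k * h) ^ 2 + k * h * h)) {σ : ℝ} (hσ : σ ∈ Icc 0 h) :
    P (k * h + σ) ≤ 6 / 5 * (k * h + h) ∧
      V (k * h + σ) ≤ 1 + 3 / 5 * L * ((k * h + h) ^ 2 + (k * h + h) * h) := by
  have hh : h ∈ Icc 0 h := ⟨hσ.1.trans hσ.2, le_rfl⟩
  have ht : 0 ≤ (k : ℝ) * h := mul_nonneg k.cast_nonneg hh.1
  have hP' := (hrec k h hh).1.trans (verlet_position_bound_step hL ht hsmall hP hV hh)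
  exact ⟨(hrec k σ hσ).1.trans (verlet_position_bound_step hL ht hsmall hP hV hσ),
    (hrec k σ hσ).2.trans (verlet_velocity_bound_step hL ht hP hP' hV hσ)⟩

lemma bound_at_grid (hrec : VerletNormRecursion L h P V) (hL : 0 ≤ L) (hh : 0 ≤ h)
    (hP0 : P 0 = 0) (hV0 : V 0 ≤ 1) {N : ℕ} (hsmall : L * (N * h) ^ 2 ≤ 1 / 6) (k : ℕ)
    (hk : k ≤ N) :
    P (k * h) ≤ 6 / 5 * (k * h) ∧ V (k * h) ≤ 1 + 3 / 5 * L * ((k * h) ^ 2 + k * h * h) := by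
  induction k with
  | zero => simp [hP0, hV0]
  | succ k ih =>
    obtain ⟨hP, hV⟩ := ih (by omega)
    have hkN : L * (k * h + h) ^ 2 ≤ 1 / 6 := by
      refine le_trans (mul_le_mul_of_nonneg_left ?_ hL) hsmall
      have : (k : ℝ) + 1 ≤ N := by exact_mod_cast hk
      gcongr
      nlinarith
    rw [Nat.cast_succ, add_one_mul]
    exact hrec.bound_on_cell hL hkN hP hV ⟨hh, le_rfl⟩

theorem bound (hrec : VerletNormRecursion L h P V) (hL : 0 ≤ L) (hh : 0 < h) {N : ℕ}
    (hTh : T = N * h) (hsmall : L * (T ^ 2 + T * h) ≤ 1 / 6) (hP0 : P 0 = 0) (hV0 : V 0 ≤ 1)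
    {s : ℝ} (hs : s ∈ Icc 0 T) : P s ≤ 6 / 5 * T ∧ V s ≤ 6 / 5 := by
  have hsmall_of_le {t : ℝ} (ht : t ∈ Icc 0 T) : L * (t ^ 2 + t * h) ≤ 1 / 6 := by
    obtain ⟨ht0, htT⟩ := ht
    exact (mul_le_mul_of_nonneg_left (by gcongr) hL).trans hsmall
  have hsq_of_le {t : ℝ} (ht : t ∈ Icc 0 T) : L * t ^ 2 ≤ 1 / 6 := by
    nlinarith [hsmall_of_le ht, mul_nonneg (mul_nonneg hL ht.1) hh.le]
  obtain ⟨k, σ, hσ, rfl⟩ := exists_nat_mul_add_of_nonneg hh hs.1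
  have hkN : k ≤ N := by
    have : (k : ℝ) * h ≤ N * h := by linarith [hs.2, hσ.1]
    exact_mod_cast le_of_mul_le_mul_right this hh
  obtain ⟨hP, hV⟩ := hrec.bound_at_grid hL hh.le hP0 hV0
    (hTh ▸ hsq_of_le ⟨hs.1.trans hs.2, le_rfl⟩) k hkN
  rcases hkN.lt_or_eq with hkN | rfl
  · have hk1 : (k : ℝ) * h + h ∈ Icc 0 T := by
      have : (k : ℝ) + 1 ≤ N := by exact_mod_cast hkN
      constructor <;> nlinarith
    obtain ⟨hPs, hVs⟩ := hrec.bound_on_cell hL (hsq_of_le hk1) hP hV (Ico_subset_Icc_self hσ)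
    exact ⟨hPs.trans (by linarith [hk1.2]), hVs.trans (by linarith [hsmall_of_le hk1])⟩
  · obtain rfl : σ = 0 := by linarith [hs.2, hσ.1]
    subst hTh
    rw [add_zero]
    exact ⟨hP, by linarith [hsmall_of_le hs]⟩

end VerletNormRecursion

theorem verlet_velocity_derivative_bounds_general {d : ℕ}
    (gradU : EuclideanSpace ℝ (Fin d) → EuclideanSpace ℝ (Fin d))
    (hess : EuclideanSpace ℝ (Fin d) →
      (EuclideanSpace ℝ (Fin d) →L[ℝ] EuclideanSpace ℝ (Fin d)))
    (L T h : ℝ) (N : ℕ)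
    (hhess : ∀ x, HasFDerivAt gradU (hess x) x)
    (hL : ∀ x, ‖hess x‖ ≤ L)
    (hh : 0 < h) (hTh : T = N * h)
    (hsmall : L * (T^2 + T * h) ≤ 1/6)
    (q w : EuclideanSpace ℝ (Fin d) → EuclideanSpace ℝ (Fin d) → ℝ →
      EuclideanSpace ℝ (Fin d))
    (hq : ∀ x v t, q x v t = x + ∫ s in (0:ℝ)..t,
      (w x v (gridFloor h s) - (s - gridFloor h s) • gradU (q x v (gridFloor h s))))
    (hw : ∀ x v t, w x v t = v - (1/2 : ℝ) • ∫ s in (0:ℝ)..t,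
      (gradU (q x v (gridFloor h s)) + gradU (q x v (gridCeil h s))))
    (Dq Dw : EuclideanSpace ℝ (Fin d) → EuclideanSpace ℝ (Fin d) → ℝ →
      (EuclideanSpace ℝ (Fin d) →L[ℝ] EuclideanSpace ℝ (Fin d)))
    (hDq : ∀ x v t, HasFDerivAt (fun v' => q x v' t) (Dq x v t) v)
    (hDw : ∀ x v t, HasFDerivAt (fun v' => w x v' t) (Dw x v t) v)
    (x v : EuclideanSpace ℝ (Fin d)) :
    (∀ s ∈ Set.Icc (0:ℝ) T, ‖Dq x v s‖ ≤ (6/5) * T) ∧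
      (∀ s ∈ Set.Icc (0:ℝ) T, ‖Dw x v s‖ ≤ 6/5) := by
  have hDqstep (k : ℕ) (σ : ℝ) (hσ : σ ∈ Icc 0 h) :=
    derivative_eq_of_position_step (hhess _) (hDq x v (k * h)) (hDq x v _) (hDw x v _)
      fun v' ↦ verlet_position_step hh (hq x v') k hσ
  have hDwstep (k : ℕ) (σ : ℝ) (hσ : σ ∈ Icc 0 h) :=
    derivative_eq_of_velocity_step (hhess _) (hhess _) (hDq x v (k * h)) (hDq x v (k * h + h))
      (hDw x v _) (hDw x v _) fun v' ↦ verlet_velocity_step hh (hw x v') k hσ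
  have hDq0 : Dq x v 0 = 0 := (hDq x v 0).unique <| by
    rw [show (fun v' ↦ q x v' 0) = fun _ ↦ x from funext fun v' ↦ by
      rw [hq x v' 0, integral_same, add_zero]]
    exact hasFDerivAt_const x v
  have hDw0 : Dw x v 0 = ContinuousLinearMap.id ℝ _ := (hDw x v 0).unique <| by
    rw [show (fun v' ↦ w x v' 0) = id from funext fun v' ↦ by
      rw [hw x v' 0, integral_same, smul_zero, sub_zero, id]]
    exact hasFDerivAt_id v
  have hrec : VerletNormRecursion L h (fun t ↦ ‖Dq x v t‖) (fun t ↦ ‖Dw x v t‖) :=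
    fun k σ hσ ↦ by
      dsimp only
      rw [hDqstep k σ hσ, hDwstep k σ hσ]
      exact ⟨norm_verlet_position_step_le (hL _) hσ.1,
        norm_verlet_velocity_step_le (hL _) (hL _) hσ.1⟩
  have hbound {s} (hs : s ∈ Icc 0 T) :=
    hrec.bound ((norm_nonneg _).trans (hL 0)) hh hTh hsmall (by simp [hDq0])
      (hDw0 ▸ ContinuousLinearMap.norm_id_le) hs
  exact ⟨fun s hs ↦ (hbound hs).1, fun s hs ↦ (hbound hs).2⟩

/-- A priori bounds for the derivative of the velocity Verlet flow with respect
to the initial velocity (Lemma `apriori2`, inequalities (apriori:5)–(apriori:6)). -/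
theorem verlet_velocity_derivative_bounds {d : ℕ}
    (U : EuclideanSpace ℝ (Fin d) → ℝ)
    (gradU : EuclideanSpace ℝ (Fin d) → EuclideanSpace ℝ (Fin d))
    (hess : EuclideanSpace ℝ (Fin d) →
      (EuclideanSpace ℝ (Fin d) →L[ℝ] EuclideanSpace ℝ (Fin d)))
    (L T h : ℝ) (N : ℕ)
    (hgrad : ∀ x, HasFDerivAt U ((innerSL ℝ) (gradU x)) x)
    (hhess : ∀ x, HasFDerivAt gradU (hess x) x)
    (hL : ∀ x, ‖hess x‖ ≤ L)
    (hT : 0 < T) (hh : 0 < h) (hN : 0 < N) (hTh : T = N * h)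
    (hsmall : L * (T^2 + T * h) ≤ 1/6)
    (q w : EuclideanSpace ℝ (Fin d) → EuclideanSpace ℝ (Fin d) → ℝ →
      EuclideanSpace ℝ (Fin d))
    (hq : ∀ x v t, q x v t = x + ∫ s in (0:ℝ)..t,
      (w x v (gridFloor h s) - (s - gridFloor h s) • gradU (q x v (gridFloor h s))))
    (hw : ∀ x v t, w x v t = v - (1/2 : ℝ) • ∫ s in (0:ℝ)..t,
      (gradU (q x v (gridFloor h s)) + gradU (q x v (gridCeil h s))))
    (Dq Dw : EuclideanSpace ℝ (Fin d) → EuclideanSpace ℝ (Fin d) → ℝ →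
      (EuclideanSpace ℝ (Fin d) →L[ℝ] EuclideanSpace ℝ (Fin d)))
    (hDq : ∀ x v t, HasFDerivAt (fun v' => q x v' t) (Dq x v t) v)
    (hDw : ∀ x v t, HasFDerivAt (fun v' => w x v' t) (Dw x v t) v)
    (x v : EuclideanSpace ℝ (Fin d)) :
    (∀ s ∈ Set.Icc (0:ℝ) T, ‖Dq x v s‖ ≤ (6/5) * T) ∧
      (∀ s ∈ Set.Icc (0:ℝ) T, ‖Dw x v s‖ ≤ 6/5) :=
  verlet_velocity_derivative_bounds_general gradU hess L T h N hhess hL hh hTh hsmall q w hq hw Dq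
    Dw hDq hDw x v
end

section
/- Suppose U ∈ C³(ℝ^d) has global minimum 0 at 0, ‖D²U‖ ≤ L, ‖D³U‖ ≤ L_H, L(T²+Th) ≤ 1/6, T/h ∈ ℕ. Then the strong discretization error of velocity Verlet relative to the exact Hamiltonian flow satisfies max_{s ≤ T} ‖q_s(x,v) − q̃_s(x,v)‖ ≤ h² ((7/45)L‖x‖ + (1547/1800)LT‖v‖ + (1/120)L_H‖x‖² + (3/10)L_H T²‖v‖²) for all x, v ∈ ℝ^d. -/
/-!
Both trajectories solve integral equations driven by the force `-∇U`, which is `L`-Lipschitz and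
vanishes at `0`. Since `L T² ≤ 1/6`, absorbing at a maximum point bounds the positions of both by
`P = 6/5 (‖x‖ + T ‖v‖)` and their speeds by `M = ‖v‖ + L T P`; for the exact flow a continuation
argument also yields the integrability that its integral equations silently presuppose.

At time `s`, with `a` the grid point below `s`, the velocity defect splits into the Lipschitz
feedback `∫₀ᵃ (∇U(Q) - ∇U(q))`, the composite trapezoidal error of `∫₀ᵃ ∇U(q)` (of order `h²`
because `∇U ∘ q` has a Lipschitz derivative on each step), the sub-step drift
`∫ₐˢ (∇U(Q) - ∇U(Q a))` and the lag `(s - a) (∇U(Q a) - ∇U(q a))`. Integrating gives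
`E ≤ T h² (L M / 2 + K T / 12) + L (T² + T h) E` for the maximal error `E`, with
`K = L_H M² + L² P`, and `L (T² + T h) ≤ 1/6` absorbs the last term.
-/

open MeasureTheory intervalIntegral

open Set

section Grid

variable {h : ℝ}

theorem gridFloor_eq_of_mem_Ico (hh : 0 < h) {j : ℤ} {s : ℝ}
    (hs : s ∈ Ico (j * h) ((j + 1) * h)) : gridFloor h s = j * h := by
  rw [gridFloor, Int.floor_eq_iff.2 ⟨(le_div_iff₀ hh).2 hs.1, (div_lt_iff₀ hh).2 hs.2⟩, mul_comm]

theorem gridCeil_eq_of_mem_Ioc (hh : 0 < h) {j : ℤ} {s : ℝ}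
    (hs : s ∈ Ioc (j * h) ((j + 1) * h)) : gridCeil h s = (j + 1) * h := by
  have : ⌈s / h⌉ = j + 1 := Int.ceil_eq_iff.2
    ⟨by push_cast; exact (lt_div_iff₀ hh).2 (by simpa using hs.1),
      (div_le_iff₀ hh).2 (by simpa using hs.2)⟩
  rw [gridCeil, this]; push_cast; ring

theorem gridFloor_le (hh : 0 < h) (s : ℝ) : gridFloor h s ≤ s :=
  (le_div_iff₀' hh).1 (Int.floor_le _)

theorem sub_gridFloor_lt (hh : 0 < h) (s : ℝ) : s - gridFloor h s < h := by
  have := (div_lt_iff₀ hh).1 (Int.lt_floor_add_one (s / h))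
  rw [gridFloor]; linarith

theorem gridFloor_nonneg (hh : 0 < h) {s : ℝ} (hs : 0 ≤ s) : 0 ≤ gridFloor h s :=
  mul_nonneg hh.le (Int.cast_nonneg (Int.floor_nonneg.2 (div_nonneg hs hh.le)))

theorem le_gridCeil (hh : 0 < h) (s : ℝ) : s ≤ gridCeil h s :=
  (div_le_iff₀' hh).1 (Int.le_ceil _)

theorem gridCeil_le_of_le (hh : 0 < h) {s : ℝ} {N : ℕ} (hs : s ≤ N * h) :
    gridCeil h s ≤ N * h := by
  have : ⌈s / h⌉ ≤ N := Int.ceil_le.2 (by simpa using (div_le_iff₀ hh).2 hs)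
  rw [gridCeil, mul_comm (N : ℝ)]
  gcongr
  exact_mod_cast this

theorem exists_gridFloor_eq (hh : 0 < h) {s : ℝ} (hs : 0 ≤ s) : ∃ m : ℕ, gridFloor h s = m * h :=
  ⟨⌊s / h⌋.toNat, by
    rw [gridFloor, mul_comm, ← Int.cast_natCast,
      Int.toNat_of_nonneg (Int.floor_nonneg.2 (div_nonneg hs hh.le))]⟩

end Grid

theorem IsLocalMin.eq_zero_of_hasFDerivAt_innerSL {F : Type*} [NormedAddCommGroup F]
    [InnerProductSpace ℝ F] {f : F → ℝ} {g a : F} (hmin : IsLocalMin f a)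
    (hf : HasFDerivAt f (innerSL ℝ g) a) : g = 0 := by
  simpa using congrArg (fun φ : F →L[ℝ] ℝ => φ g) (hmin.hasFDerivAt_eq_zero hf)

theorem nonneg_of_norm_sub_le_mul_norm_sub {α β : Type*} [NormedAddCommGroup α] [Nontrivial α]
    [SeminormedAddCommGroup β] {f : α → β} {K : ℝ} (hf : ∀ x y, ‖f x - f y‖ ≤ K * ‖x - y‖) :
    0 ≤ K := by
  obtain ⟨y, hy⟩ := exists_ne (0 : α)
  have := (norm_nonneg _).trans (hf y 0)
  rw [sub_zero] at this
  exact nonneg_of_mul_nonneg_left this (norm_pos_iff.2 hy)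

theorem IsCompact.one_sub_mul_le_of_isMaxOn {α : Type*} [TopologicalSpace α] {K : Set α}
    (hK : IsCompact K) (hne : K.Nonempty) {f : α → ℝ} (hf : ContinuousOn f K) {A c : ℝ}
    (hc : c ≤ 1) (hmax : ∀ t ∈ K, IsMaxOn f K t → f t ≤ A + c * f t) :
    ∀ t ∈ K, (1 - c) * f t ≤ A := by
  obtain ⟨t₀, ht₀, hmax₀⟩ := hK.exists_isMaxOn hne hf
  intro t ht
  nlinarith [hmax t₀ ht₀ hmax₀, mul_le_mul_of_nonneg_left (hmax₀ ht) (sub_nonneg.2 hc)]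

theorem le_six_fifths_mul_of_one_sub_mul_le {c y A : ℝ} (hc : c ≤ 1 / 6) (hy : 0 ≤ y)
    (h : (1 - c) * y ≤ A) : y ≤ 6 / 5 * A := by
  nlinarith [mul_le_mul_of_nonneg_right hc hy]

theorem ContinuousLinearMap.norm_apply_sub_apply_le {𝕜 E F : Type*} [NontriviallyNormedField 𝕜]
    [NormedAddCommGroup E] [NormedSpace 𝕜 E] [NormedAddCommGroup F] [NormedSpace 𝕜 F]
    (A B : E →L[𝕜] F) (u u' : E) :
    ‖A u - B u'‖ ≤ ‖A - B‖ * ‖u‖ + ‖B‖ * ‖u - u'‖ := by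
  calc ‖A u - B u'‖ = ‖(A - B) u + B (u - u')‖ := by
        rw [sub_apply, map_sub]; abel_nf
    _ ≤ ‖A - B‖ * ‖u‖ + ‖B‖ * ‖u - u'‖ :=
        (norm_add_le _ _).trans (add_le_add (le_opNorm _ _) (le_opNorm _ _))

section Integrals

variable {E : Type*} [NormedAddCommGroup E]

theorem one_sub_mul_norm_le_of_eq_add_integral [NormedSpace ℝ E] {y u : ℝ → E} {x : E} {V L t T : ℝ}
    (ht : 0 ≤ t) (htT : t ≤ T) (hLT : L * T ^ 2 ≤ 1) (hy : ContinuousOn y (Icc 0 t))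
    (hyu : ∀ r ∈ Icc 0 t, y r = x + ∫ s in 0..r, u s)
    (hu : ∀ C, (∀ r ∈ Icc 0 t, ‖y r‖ ≤ C) → ∀ s ∈ Icc 0 t, ‖u s‖ ≤ V + L * T * C) :
    ∀ r ∈ Icc 0 t, (1 - L * T ^ 2) * ‖y r‖ ≤ ‖x‖ + T * V := by
  refine isCompact_Icc.one_sub_mul_le_of_isMaxOn (nonempty_Icc.2 ht) hy.norm hLT ?_
  intro r hr hmax
  have hur := hu ‖y r‖ fun r' hr' => hmax hr'
  have hB : 0 ≤ V + L * T * ‖y r‖ := (norm_nonneg _).trans (hur 0 (left_mem_Icc.2 ht))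
  have hint : ‖∫ s in 0..r, u s‖ ≤ (V + L * T * ‖y r‖) * |r - 0| :=
    norm_integral_le_of_norm_le_const fun s hs => by
      rw [uIoc_of_le hr.1] at hs
      exact hur s ⟨hs.1.le, hs.2.trans hr.2⟩
  rw [sub_zero, abs_of_nonneg hr.1] at hint
  calc ‖y r‖ ≤ ‖x‖ + ‖∫ s in 0..r, u s‖ := by rw [hyu r hr]; exact norm_add_le _ _
    _ ≤ ‖x‖ + (V + L * T * ‖y r‖) * T := by gcongr; exact hint.trans (by gcongr; linarith [hr.2])
    _ = ‖x‖ + T * V + L * T ^ 2 * ‖y r‖ := by ring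

theorem continuousOn_integral_Icc [NormedSpace ℝ E] {u : ℝ → E} {t : ℝ}
    (hu : IntervalIntegrable u volume 0 t) (ht : 0 ≤ t) :
    ContinuousOn (fun s => ∫ r in 0..s, u r) (Icc 0 t) := by
  simpa only [uIcc_of_le ht] using continuousOn_primitive_interval' hu (left_mem_uIcc (b := t))

theorem intervalIntegrable_of_forall_grid {f : ℝ → E} {h t : ℝ} (hh : 0 < h) (ht : 0 ≤ t)
    (hf : ∀ k : ℕ, IntervalIntegrable f volume (k * h) ((k + 1) * h)) :
    IntervalIntegrable f volume 0 t := by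
  obtain ⟨n, hn⟩ := exists_nat_ge (t / h)
  have hgrid : IntervalIntegrable f volume ((0 : ℕ) * h) (n * h) :=
    IntervalIntegrable.trans_iterate (a := fun k : ℕ => (k : ℝ) * h) fun k _ => by
      simpa using hf k
  rw [Nat.cast_zero, zero_mul] at hgrid
  refine hgrid.mono_set ?_
  rw [uIcc_of_le ht, uIcc_of_le (by positivity)]
  exact Icc_subset_Icc le_rfl ((div_le_iff₀ hh).1 hn)

variable [NormedSpace ℝ E] [CompleteSpace E]

theorem norm_integral_sub_trapezoid_le {g g' : ℝ → E} {a b K : ℝ} (hab : a ≤ b)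
    (hg : ∀ t ∈ Icc a b, HasDerivWithinAt g (g' t) (Icc a b) t)
    (hg' : ∀ s ∈ Icc a b, ∀ t ∈ Icc a b, ‖g' s - g' t‖ ≤ K * |s - t|) :
    ‖(∫ s in a..b, g s) - ((b - a) / 2) • (g a + g b)‖ ≤ K * (b - a) ^ 3 / 12 := by
  set m := (a + b) / 2
  have hm : m ∈ Icc a b := ⟨by simp only [m]; linarith, by simp only [m]; linarith⟩
  have hg'c : ContinuousOn g' (Icc a b) :=
    (LipschitzOnWith.of_dist_le' fun s hs t ht => by
      simpa only [dist_eq_norm, Real.norm_eq_abs] using hg' s hs t ht).continuousOn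
  rw [← uIcc_of_le hab] at hg hg'c
  -- integrating by parts against `s - m`, whose integral vanishes, leaves `g' s - g' m`
  have hparts := integral_smul_deriv_eq_deriv_smul_of_hasDerivWithinAt (u := fun s => s - m)
    (u' := fun _ => (1 : ℝ)) (fun t _ => ((hasDerivAt_id t).sub_const m).hasDerivWithinAt) hg
    intervalIntegrable_const hg'c.intervalIntegrable
  have hzero : ∫ s in a..b, (s - m) • g' m = 0 := by
    rw [intervalIntegral.integral_smul_const, integral_comp_sub_right (fun s => s), integral_id,
      show ((b - m) ^ 2 - (a - m) ^ 2) / 2 = 0 by simp only [m]; ring, zero_smul]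
  have herr : (∫ s in a..b, g s) - ((b - a) / 2) • (g a + g b)
      = -∫ s in a..b, (s - m) • (g' s - g' m) := by
    simp_rw [smul_sub]
    rw [integral_sub (hg'c.intervalIntegrable.continuousOn_smul (by fun_prop))
      (Continuous.intervalIntegrable (by fun_prop) _ _), hzero, hparts]
    simp only [one_smul, m]
    module
  rw [herr, norm_neg]
  calc ‖∫ s in a..b, (s - m) • (g' s - g' m)‖ ≤ ∫ s in a..b, K * (s - m) ^ 2 := by
        refine norm_integral_le_of_norm_le hab (ae_of_all _ fun s hs => ?_)
          (Continuous.intervalIntegrable (by fun_prop) _ _)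
        have hs' : s ∈ Icc a b := Ioc_subset_Icc_self hs
        rw [norm_smul, Real.norm_eq_abs]
        calc |s - m| * ‖g' s - g' m‖ ≤ |s - m| * (K * |s - m|) := by
              gcongr; exact hg' s hs' m hm
          _ = K * (s - m) ^ 2 := by rw [← sq_abs]; ring
    _ = K * (b - a) ^ 3 / 12 := by
        rw [intervalIntegral.integral_const_mul, integral_comp_sub_right (fun s => s ^ 2),
          integral_pow]
        simp only [m]; ring

theorem norm_integral_sub_sum_trapezoid_le {g : ℝ → E} {g' : ℕ → ℝ → E} {h K : ℝ} {m : ℕ}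
    (hh : 0 ≤ h)
    (hg : ∀ k < m, ∀ t ∈ Icc (k * h) ((k + 1) * h),
      HasDerivWithinAt g (g' k t) (Icc (k * h) ((k + 1) * h)) t)
    (hg' : ∀ k < m, ∀ s ∈ Icc (k * h) ((k + 1) * h), ∀ t ∈ Icc (k * h) ((k + 1) * h),
      ‖g' k s - g' k t‖ ≤ K * |s - t|) :
    ‖(∫ s in 0..m * h, g s) - ∑ k ∈ Finset.range m, (h / 2) • (g (k * h) + g ((k + 1) * h))‖
      ≤ m * (K * h ^ 3 / 12) := by
  have hstep (k : ℕ) : ((k + 1 : ℕ) : ℝ) * h = (k + 1) * h := by push_cast; ring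
  have hsplit : ∫ s in 0..m * h, g s = ∑ k ∈ Finset.range m, ∫ s in k * h..(k + 1) * h, g s := by
    have := sum_integral_adjacent_intervals (a := fun k : ℕ => (k : ℝ) * h) (n := m) (f := g)
      (μ := volume) fun k hk => by
        rw [hstep]
        refine ContinuousOn.intervalIntegrable ?_
        rw [uIcc_of_le (by nlinarith)]
        exact fun t ht => (hg k hk t ht).continuousWithinAt
    simpa only [hstep, Nat.cast_zero, zero_mul] using this.symm
  rw [hsplit, ← Finset.sum_sub_distrib]
  refine (norm_sum_le _ _).trans ?_
  calc ∑ k ∈ Finset.range m,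
        ‖(∫ s in k * h..(k + 1) * h, g s) - (h / 2) • (g (k * h) + g ((k + 1) * h))‖
      ≤ ∑ _k ∈ Finset.range m, K * h ^ 3 / 12 := Finset.sum_le_sum fun k hk => by
        have := norm_integral_sub_trapezoid_le (by nlinarith) (hg k (Finset.mem_range.1 hk))
          (hg' k (Finset.mem_range.1 hk))
        rwa [show ((k : ℝ) + 1) * h - k * h = h by ring] at this
    _ = m * (K * h ^ 3 / 12) := by rw [Finset.sum_const, Finset.card_range, nsmul_eq_mul]

end Integrals

section Verlet

variable {E : Type*} [NormedAddCommGroup E]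

noncomputable def verletForceSum (G : E → E) (h : ℝ) (q : ℝ → E) (s : ℝ) : E :=
  G (q (gridFloor h s)) + G (q (gridCeil h s))

variable {G : E → E} {h L C T : ℝ} {N : ℕ} {q w : ℝ → E} {x v : E}

theorem verletForceSum_eq_of_mem_Ioo (hh : 0 < h) {j : ℕ} {s : ℝ}
    (hs : s ∈ Ioo (j * h) ((j + 1) * h)) :
    verletForceSum G h q s = G (q (j * h)) + G (q ((j + 1) * h)) := by
  rw [verletForceSum,
    gridFloor_eq_of_mem_Ico hh (j := j) (by exact_mod_cast Ioo_subset_Ico_self hs),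
    gridCeil_eq_of_mem_Ioc hh (j := j) (by exact_mod_cast Ioo_subset_Ioc_self hs)]
  push_cast; rfl

theorem intervalIntegrable_verletForceSum_step (hh : 0 < h) (j : ℕ) :
    IntervalIntegrable (verletForceSum G h q) volume (j * h) ((j + 1) * h) :=
  intervalIntegrable_const.congr_uIoo fun s hs =>
    (verletForceSum_eq_of_mem_Ioo hh (by rwa [uIoo_of_le (by nlinarith)] at hs)).symm

theorem intervalIntegrable_verletForceSum (hh : 0 < h) {t : ℝ} (ht : 0 ≤ t) :
    IntervalIntegrable (verletForceSum G h q) volume 0 t :=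
  intervalIntegrable_of_forall_grid hh ht (intervalIntegrable_verletForceSum_step hh)

variable [NormedSpace ℝ E]

noncomputable def verletVelocity (G : E → E) (h : ℝ) (q w : ℝ → E) (s : ℝ) : E :=
  w (gridFloor h s) - (s - gridFloor h s) • G (q (gridFloor h s))

/-- Velocity Verlet with step `h` for the force `-G`, interpolated in time: `w` is the velocity
at the grid points, between them `q` is the Taylor quadratic with frozen force, and the velocity
update integrates the force by the trapezoidal rule. -/
structure IsVerletInterpolation (G : E → E) (h : ℝ) (x v : E) (q w : ℝ → E) : Prop where
  position_eq : ∀ t, q t = x + ∫ s in (0 : ℝ)..t, verletVelocity G h q w s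
  velocity_eq : ∀ t, w t = v - (1 / 2 : ℝ) • ∫ s in (0 : ℝ)..t, verletForceSum G h q s

theorem verletVelocity_eq_of_mem_Ico (hh : 0 < h) {j : ℕ} {s : ℝ}
    (hs : s ∈ Ico (j * h) ((j + 1) * h)) :
    verletVelocity G h q w s = w (j * h) - (s - j * h) • G (q (j * h)) := by
  rw [verletVelocity, gridFloor_eq_of_mem_Ico hh (j := j) (by exact_mod_cast hs), Int.cast_natCast]

theorem intervalIntegrable_verletVelocity (hh : 0 < h) {t : ℝ} (ht : 0 ≤ t) :
    IntervalIntegrable (verletVelocity G h q w) volume 0 t :=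
  intervalIntegrable_of_forall_grid hh ht fun j =>
    (Continuous.intervalIntegrable (u := fun s => w (j * h) - (s - j * h) • G (q (j * h)))
      (by fun_prop) _ _).congr_uIoo fun s hs =>
      (verletVelocity_eq_of_mem_Ico hh
        (Ioo_subset_Ico_self (by rwa [uIoo_of_le (by nlinarith)] at hs))).symm

namespace IsVerletInterpolation

theorem continuousOn (hV : IsVerletInterpolation G h x v q w) (hh : 0 < h)
    {t : ℝ} (ht : 0 ≤ t) : ContinuousOn q (Icc 0 t) :=
  (continuousOn_const.add
    (continuousOn_integral_Icc (intervalIntegrable_verletVelocity hh ht) ht)).congr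
      fun s _ => hV.position_eq s

theorem norm_sub_smul_le (hV : IsVerletInterpolation G h x v q w) (hh : 0 < h)
    (hG : ∀ y, ‖G y‖ ≤ L * ‖y‖) (hL0 : 0 ≤ L) (hTN : T = N * h)
    (hC : ∀ r ∈ Icc 0 T, ‖q r‖ ≤ C) {a r : ℝ} (ha : 0 ≤ a) (har : a ≤ r) (hrT : r ≤ T) :
    ‖w a - (r - a) • G (q a)‖ ≤ ‖v‖ + L * C * r := by
  have hGq : ∀ s ∈ Icc 0 T, ‖G (q s)‖ ≤ L * C := fun s hs =>
    (hG _).trans (mul_le_mul_of_nonneg_left (hC s hs) hL0)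
  have hsum : ∀ s ∈ uIoc 0 a, ‖verletForceSum G h q s‖ ≤ 2 * (L * C) := fun s hs => by
    rw [uIoc_of_le ha] at hs
    have hsT : s ≤ T := hs.2.trans (har.trans hrT)
    have hfl : gridFloor h s ∈ Icc 0 T :=
      ⟨gridFloor_nonneg hh hs.1.le, (gridFloor_le hh s).trans hsT⟩
    have hcl : gridCeil h s ∈ Icc 0 T :=
      ⟨hs.1.le.trans (le_gridCeil hh s), hTN ▸ gridCeil_le_of_le hh (hTN ▸ hsT)⟩
    calc _ ≤ ‖G (q (gridFloor h s))‖ + ‖G (q (gridCeil h s))‖ := norm_add_le _ _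
      _ ≤ 2 * (L * C) := by linarith [hGq _ hfl, hGq _ hcl]
  have hint := norm_integral_le_of_norm_le_const hsum
  rw [sub_zero, abs_of_nonneg ha] at hint
  have hra : 0 ≤ r - a := sub_nonneg.2 har
  calc ‖w a - (r - a) • G (q a)‖
      ≤ ‖v‖ + (1 / 2) * ‖∫ s in 0..a, verletForceSum G h q s‖ + (r - a) * ‖G (q a)‖ := by
        rw [hV.velocity_eq a]
        refine (norm_sub_le _ _).trans (add_le_add ((norm_sub_le _ _).trans_eq ?_) ?_)
        · rw [norm_smul, Real.norm_of_nonneg (by norm_num)]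
        · rw [norm_smul, Real.norm_of_nonneg hra]
    _ ≤ ‖v‖ + (1 / 2) * (2 * (L * C) * a) + (r - a) * (L * C) := by
        gcongr
        exact hGq a ⟨ha, har.trans hrT⟩
    _ = ‖v‖ + L * C * r := by ring

theorem norm_verletVelocity_le (hV : IsVerletInterpolation G h x v q w) (hh : 0 < h)
    (hG : ∀ y, ‖G y‖ ≤ L * ‖y‖) (hL0 : 0 ≤ L) (hTN : T = N * h)
    (hC : ∀ r ∈ Icc 0 T, ‖q r‖ ≤ C) {s : ℝ} (hs : s ∈ Icc 0 T) :
    ‖verletVelocity G h q w s‖ ≤ ‖v‖ + L * C * s :=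
  hV.norm_sub_smul_le hh hG hL0 hTN hC (gridFloor_nonneg hh hs.1) (gridFloor_le hh s) hs.2

theorem one_sub_mul_norm_le (hV : IsVerletInterpolation G h x v q w) (hh : 0 < h)
    (hG : ∀ y, ‖G y‖ ≤ L * ‖y‖) (hL0 : 0 ≤ L) (hTN : T = N * h) (hLT : L * T ^ 2 ≤ 1) :
    ∀ t ∈ Icc 0 T, (1 - L * T ^ 2) * ‖q t‖ ≤ ‖x‖ + T * ‖v‖ := by
  have hT : 0 ≤ T := hTN ▸ by positivity
  refine one_sub_mul_norm_le_of_eq_add_integral hT le_rfl hLT (hV.continuousOn hh hT)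
    (fun r _ => hV.position_eq r) fun C hC s hs => ?_
  have hC0 : 0 ≤ C := (norm_nonneg _).trans (hC 0 (left_mem_Icc.2 hT))
  calc _ ≤ ‖v‖ + L * C * s := hV.norm_verletVelocity_le hh hG hL0 hTN hC hs
    _ ≤ ‖v‖ + L * T * C := by nlinarith [mul_nonneg hL0 hC0, hs.2]

end IsVerletInterpolation

variable [CompleteSpace E]

theorem integral_verletForceSum_step (hh : 0 < h) (j : ℕ) :
    ∫ s in j * h..(j + 1) * h, verletForceSum G h q s
      = h • (G (q (j * h)) + G (q ((j + 1) * h))) := by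
  rw [integral_congr_Ioo_of_le (by nlinarith) fun s hs => verletForceSum_eq_of_mem_Ioo hh hs,
    intervalIntegral.integral_const, show ((j : ℝ) + 1) * h - j * h = h by ring]

theorem half_integral_verletForceSum (hh : 0 < h) (m : ℕ) :
    (1 / 2 : ℝ) • ∫ s in 0..m * h, verletForceSum G h q s
      = ∑ k ∈ Finset.range m, (h / 2) • (G (q (k * h)) + G (q ((k + 1) * h))) := by
  have hstep (k : ℕ) : ((k + 1 : ℕ) : ℝ) * h = (k + 1) * h := by push_cast; ring
  have hsplit := sum_integral_adjacent_intervals (a := fun k : ℕ => (k : ℝ) * h) (n := m)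
    (f := verletForceSum G h q) (μ := volume) fun k _ => by
      rw [hstep]; exact intervalIntegrable_verletForceSum_step hh k
  simp only [hstep, Nat.cast_zero, zero_mul] at hsplit
  rw [← hsplit, Finset.smul_sum]
  refine Finset.sum_congr rfl fun k _ => ?_
  rw [integral_verletForceSum_step hh, smul_smul, one_div_mul_eq_div]

namespace IsVerletInterpolation

theorem eq_of_mem_Icc_step (hV : IsVerletInterpolation G h x v q w) (hh : 0 < h) {j : ℕ} {t : ℝ}
    (ht : t ∈ Icc (j * h) ((j + 1) * h)) :
    q t = q (j * h) + (t - j * h) • w (j * h) - ((t - j * h) ^ 2 / 2) • G (q (j * h)) := by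
  have h0 : 0 ≤ (j : ℝ) * h := by positivity
  have hint {r : ℝ} (hr : 0 ≤ r) :=
    intervalIntegrable_verletVelocity (G := G) (q := q) (w := w) hh hr
  have hdiff : q t - q (j * h) = ∫ s in j * h..t, verletVelocity G h q w s := by
    rw [hV.position_eq t, hV.position_eq (j * h), add_sub_add_left_eq_sub,
      integral_interval_sub_left (hint (h0.trans ht.1)) (hint h0)]
  rw [integral_congr_Ioo_of_le ht.1 fun s hs => verletVelocity_eq_of_mem_Ico hh
      ⟨hs.1.le, hs.2.trans_le ht.2⟩,
    integral_sub intervalIntegrable_const (Continuous.intervalIntegrable (by fun_prop) _ _),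
    intervalIntegral.integral_const, intervalIntegral.integral_smul_const,
    integral_comp_sub_right (fun s => s), integral_id, sub_self, sub_eq_iff_eq_add'] at hdiff
  rw [hdiff]
  module

theorem hasDerivWithinAt_step (hV : IsVerletInterpolation G h x v q w) (hh : 0 < h) {j : ℕ} {t : ℝ}
    (ht : t ∈ Icc (j * h) ((j + 1) * h)) :
    HasDerivWithinAt q (w (j * h) - (t - j * h) • G (q (j * h))) (Icc (j * h) ((j + 1) * h)) t := by
  have hlin := ((hasDerivAt_id t).sub_const ((j : ℝ) * h)).smul_const (w (j * h))
  have hquad := ((((hasDerivAt_id t).sub_const ((j : ℝ) * h)).pow 2).div_const 2).smul_const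
    (G (q (j * h)))
  have hpoly := (hlin.const_add (q (j * h))).sub hquad
  refine (hpoly.hasDerivWithinAt.congr (fun u hu => hV.eq_of_mem_Icc_step hh hu)
    (hV.eq_of_mem_Icc_step hh ht)).congr_deriv ?_
  simp only [id_eq, one_smul]
  module

theorem norm_integral_sub_half_integral_le (hV : IsVerletInterpolation G h x v q w) (hh : 0 < h)
    {DG : E → E →L[ℝ] E} {LH M A : ℝ} (hDG : ∀ y, HasFDerivAt G (DG y) y)
    (hL : ∀ y, ‖DG y‖ ≤ L) (hLH : ∀ y z, ‖DG y - DG z‖ ≤ LH * ‖y - z‖) (hLH0 : 0 ≤ LH) {m : ℕ}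
    (hu : ∀ k < m, ∀ t ∈ Icc (k * h) ((k + 1) * h), ‖w (k * h) - (t - k * h) • G (q (k * h))‖ ≤ M)
    (hA : ∀ k < m, ‖G (q (k * h))‖ ≤ A) :
    ‖(∫ s in 0..m * h, G (q s)) - (1 / 2 : ℝ) • ∫ s in 0..m * h, verletForceSum G h q s‖
      ≤ m * ((LH * M ^ 2 + L * A) * h ^ 3 / 12) := by
  rw [half_integral_verletForceSum hh]
  refine norm_integral_sub_sum_trapezoid_le hh.le
    (g' := fun k t => DG (q t) (w (k * h) - (t - k * h) • G (q (k * h))))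
    (fun k _ t ht => (hDG (q t)).comp_hasDerivWithinAt t (hV.hasDerivWithinAt_step hh ht)) ?_
  intro k hk s hs t ht
  set u : ℝ → E := fun r => w (k * h) - (r - k * h) • G (q (k * h))
  show ‖DG (q s) (u s) - DG (q t) (u t)‖ ≤ (LH * M ^ 2 + L * A) * |s - t|
  have hM0 : 0 ≤ M := (norm_nonneg _).trans (hu k hk s hs)
  have hq : ‖q s - q t‖ ≤ M * |s - t| := by
    simpa only [Real.norm_eq_abs] using (convex_Icc _ _).norm_image_sub_le_of_norm_hasDerivWithin_le
      (fun r hr => hV.hasDerivWithinAt_step hh hr) (hu k hk) ht hs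
  have hDGq : ‖DG (q s) - DG (q t)‖ ≤ LH * (M * |s - t|) :=
    (hLH _ _).trans (mul_le_mul_of_nonneg_left hq hLH0)
  have hu' : ‖u s - u t‖ ≤ |s - t| * A := by
    rw [show u s - u t = (t - s) • G (q (k * h)) by simp only [u]; module, norm_smul,
      Real.norm_eq_abs, abs_sub_comm]
    exact mul_le_mul_of_nonneg_left (hA k hk) (abs_nonneg _)
  calc ‖DG (q s) (u s) - DG (q t) (u t)‖
      ≤ ‖DG (q s) - DG (q t)‖ * ‖u s‖ + ‖DG (q t)‖ * ‖u s - u t‖ :=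
        ContinuousLinearMap.norm_apply_sub_apply_le _ _ _ _
    _ ≤ LH * (M * |s - t|) * M + L * (|s - t| * A) :=
        add_le_add (mul_le_mul hDGq (hu k hk s hs) (norm_nonneg _) (by positivity))
          (mul_le_mul (hL _) hu' (norm_nonneg _) ((norm_nonneg _).trans (hL 0)))
    _ = (LH * M ^ 2 + L * A) * |s - t| := by ring

theorem norm_integral_gridFloor_sub_half_integral_le (hV : IsVerletInterpolation G h x v q w)
    (hh : 0 < h) {DG : E → E →L[ℝ] E} {LH M A : ℝ} (hDG : ∀ y, HasFDerivAt G (DG y) y)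
    (hL : ∀ y, ‖DG y‖ ≤ L) (hLH : ∀ y z, ‖DG y - DG z‖ ≤ LH * ‖y - z‖) (hLH0 : 0 ≤ LH)
    (hu : ∀ a r, 0 ≤ a → a ≤ r → r ≤ T → ‖w a - (r - a) • G (q a)‖ ≤ M)
    (hA : ∀ r ∈ Icc 0 T, ‖G (q r)‖ ≤ A) {s : ℝ} (hs : s ∈ Icc 0 T) :
    ‖(∫ r in 0..gridFloor h s, G (q r))
        - (1 / 2 : ℝ) • ∫ r in 0..gridFloor h s, verletForceSum G h q r‖
      ≤ T * ((LH * M ^ 2 + L * A) * h ^ 2 / 12) := by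
  obtain ⟨m, hm⟩ := exists_gridFloor_eq hh hs.1
  have hmT : m * h ≤ T := hm ▸ (gridFloor_le hh s).trans hs.2
  have hkT {k : ℕ} (hk : k < m) : ((k : ℝ) + 1) * h ≤ T :=
    (mul_le_mul_of_nonneg_right (by exact_mod_cast hk) hh.le).trans hmT
  have hM0 : 0 ≤ M := (norm_nonneg _).trans (hu 0 0 le_rfl le_rfl (hs.1.trans hs.2))
  have hK : 0 ≤ LH * M ^ 2 + L * A := add_nonneg (by positivity) <| mul_nonneg
    ((norm_nonneg _).trans (hL 0)) ((norm_nonneg _).trans (hA 0 ⟨le_rfl, hs.1.trans hs.2⟩))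
  rw [hm]
  refine (hV.norm_integral_sub_half_integral_le hh hDG hL hLH hLH0
    (fun k hk t ht => hu _ _ (by positivity) ht.1 (ht.2.trans (hkT hk)))
    (fun k hk => hA _ ⟨by positivity, by nlinarith [hkT hk]⟩)).trans ?_
  calc (m : ℝ) * ((LH * M ^ 2 + L * A) * h ^ 3 / 12)
      = m * h * ((LH * M ^ 2 + L * A) * h ^ 2 / 12) := by ring
    _ ≤ T * ((LH * M ^ 2 + L * A) * h ^ 2 / 12) := by gcongr

end IsVerletInterpolation

end Verlet

section HamiltonianFlow

variable {E : Type*} [NormedAddCommGroup E] [NormedSpace ℝ E]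
  {G : E → E} {x v : E} {Q V : ℝ → E} {L t T : ℝ}

structure IsHamiltonianFlow (G : E → E) (x v : E) (Q V : ℝ → E) : Prop where
  position_eq : ∀ t, Q t = x + ∫ s in (0 : ℝ)..t, V s
  velocity_eq : ∀ t, V t = v - ∫ s in (0 : ℝ)..t, G (Q s)

namespace IsHamiltonianFlow

theorem continuousOn_of_intervalIntegrable (hF : IsHamiltonianFlow G x v Q V) (ht : 0 ≤ t)
    (hint : IntervalIntegrable (fun s => G (Q s)) volume 0 t) :
    ContinuousOn Q (Icc 0 t) ∧ ContinuousOn V (Icc 0 t) := by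
  have hV : ContinuousOn V (Icc 0 t) :=
    (continuousOn_const.sub (continuousOn_integral_Icc hint ht)).congr fun s _ => hF.velocity_eq s
  refine ⟨(continuousOn_const.add (continuousOn_integral_Icc ?_ ht)).congr
    fun s _ => hF.position_eq s, hV⟩
  exact hV.intervalIntegrable_of_Icc ht

theorem norm_velocity_le (hF : IsHamiltonianFlow G x v Q V) (hG : ∀ y, ‖G y‖ ≤ L * ‖y‖)
    (hL0 : 0 ≤ L) {C s : ℝ} (hs : 0 ≤ s) (hC : ∀ r ∈ Icc 0 s, ‖Q r‖ ≤ C) :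
    ‖V s‖ ≤ ‖v‖ + L * C * s := by
  have hint : ‖∫ r in 0..s, G (Q r)‖ ≤ L * C * |s - 0| :=
    norm_integral_le_of_norm_le_const fun r hr => by
      rw [uIoc_of_le hs] at hr
      exact (hG _).trans (mul_le_mul_of_nonneg_left (hC r (Ioc_subset_Icc_self hr)) hL0)
  rw [sub_zero, abs_of_nonneg hs] at hint
  rw [hF.velocity_eq]
  exact (norm_sub_le _ _).trans (add_le_add_right hint _)

theorem one_sub_mul_norm_le (hF : IsHamiltonianFlow G x v Q V) (hG : ∀ y, ‖G y‖ ≤ L * ‖y‖)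
    (hL0 : 0 ≤ L) (ht : 0 ≤ t) (htT : t ≤ T) (hLT : L * T ^ 2 ≤ 1)
    (hQ : ContinuousOn Q (Icc 0 t)) :
    ∀ r ∈ Icc 0 t, (1 - L * T ^ 2) * ‖Q r‖ ≤ ‖x‖ + T * ‖v‖ :=
  one_sub_mul_norm_le_of_eq_add_integral ht htT hLT hQ (fun r _ => hF.position_eq r)
    fun C hC s hs => by
      have hC0 : 0 ≤ C := (norm_nonneg _).trans (hC 0 (left_mem_Icc.2 ht))
      calc ‖V s‖ ≤ ‖v‖ + L * C * s :=
            hF.norm_velocity_le hG hL0 hs.1 fun r hr => hC r ⟨hr.1, hr.2.trans hs.2⟩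
        _ ≤ ‖v‖ + L * T * C := by nlinarith [mul_nonneg hL0 hC0, hs.2]

theorem continuousOn (hF : IsHamiltonianFlow G x v Q V) (hGc : Continuous G)
    (hG : ∀ y, ‖G y‖ ≤ L * ‖y‖) (hL0 : 0 ≤ L) (hT : 0 ≤ T) (hLT : L * T ^ 2 < 1) :
    ContinuousOn Q (Icc 0 T) ∧ ContinuousOn V (Icc 0 T) := by
  set S := {t | t ∈ Icc 0 T ∧ IntervalIntegrable (fun s => G (Q s)) volume 0 t}
  suffices hTS : T ∈ S from hF.continuousOn_of_intervalIntegrable hT hTS.2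
  have h0S : (0 : ℝ) ∈ S := ⟨left_mem_Icc.2 hT, IntervalIntegrable.refl⟩
  have hbdd : BddAbove S := ⟨T, fun t ht => ht.1.2⟩
  set a := sSup S
  have ha : a ∈ Icc 0 T := ⟨le_csSup hbdd h0S, csSup_le ⟨0, h0S⟩ fun t ht => ht.1.2⟩
  have hbelow : ∀ r ∈ Ico 0 a, ∃ t ∈ S, r < t := fun r hr => exists_lt_of_lt_csSup ⟨0, h0S⟩ hr.2
  have hcont : ContinuousOn (fun s => G (Q s)) (Ico 0 a) := fun r hr => by
    obtain ⟨t, ht, hrt⟩ := hbelow r hr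
    refine ((hGc.comp_continuousOn (hF.continuousOn_of_intervalIntegrable ht.1.1 ht.2).1) r
      ⟨hr.1, hrt.le⟩).mono_of_mem_nhdsWithin ?_
    exact mem_nhdsWithin.2 ⟨Iio t, isOpen_Iio, hrt, fun u hu => ⟨hu.2.1, hu.1.le⟩⟩
  have hbound : ∀ r ∈ Ico 0 a, ‖G (Q r)‖ ≤ L * ((‖x‖ + T * ‖v‖) / (1 - L * T ^ 2)) :=
    fun r hr => by
      obtain ⟨t, ht, hrt⟩ := hbelow r hr
      refine (hG _).trans (mul_le_mul_of_nonneg_left ((le_div_iff₀' (by linarith)).2 ?_) hL0)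
      exact hF.one_sub_mul_norm_le hG hL0 ht.1.1 ht.1.2 hLT.le
        (hF.continuousOn_of_intervalIntegrable ht.1.1 ht.2).1 r ⟨hr.1, hrt.le⟩
  have haS : a ∈ S := ⟨ha, (intervalIntegrable_iff_integrableOn_Ico_of_le ha.1).2 <|
    IntegrableOn.of_bound measure_Ico_lt_top (hcont.aestronglyMeasurable measurableSet_Ico) _
      (ae_restrict_of_forall_mem measurableSet_Ico hbound)⟩
  by_contra hTS
  have haT : a < T := ha.2.lt_of_ne fun h => hTS (h ▸ haS)
  -- beyond `a` the force integral takes the junk value `0`, so the velocity stays `v`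
  have hfrozen : ∀ r ∈ Ioc a T, V r = v := fun r hr => by
    rw [hF.velocity_eq, integral_undef fun hint =>
      hr.1.not_ge (le_csSup hbdd ⟨⟨ha.1.trans hr.1.le, hr.2⟩, hint⟩), sub_zero]
  have hV : IntervalIntegrable V volume 0 T :=
    ((hF.continuousOn_of_intervalIntegrable ha.1 haS.2).2.intervalIntegrable_of_Icc ha.1).trans
      (intervalIntegrable_const.congr_uIoo fun r hr =>
        (hfrozen r (Ioo_subset_Ioc_self (by rwa [uIoo_of_le haT.le] at hr))).symm)
  have hQ : ContinuousOn Q (Icc 0 T) :=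
    (continuousOn_const.add (continuousOn_integral_Icc hV hT)).congr fun s _ => hF.position_eq s
  exact hTS ⟨right_mem_Icc.2 hT, (hGc.comp_continuousOn hQ).intervalIntegrable_of_Icc hT⟩

theorem norm_sub_le_of_norm_velocity_le (hF : IsHamiltonianFlow G x v Q V)
    (hV : ContinuousOn V (Icc 0 T)) {M : ℝ} (hM : ∀ s ∈ Icc 0 T, ‖V s‖ ≤ M) {c r : ℝ}
    (hc : 0 ≤ c) (hcr : c ≤ r) (hr : r ≤ T) :
    ‖Q r - Q c‖ ≤ M * (r - c) := by
  have hint {b : ℝ} (hb : b ∈ Icc 0 T) : IntervalIntegrable V volume 0 b :=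
    (hV.mono (Icc_subset_Icc_right hb.2)).intervalIntegrable_of_Icc hb.1
  rw [hF.position_eq, hF.position_eq, add_sub_add_left_eq_sub,
    integral_interval_sub_left (hint ⟨hc.trans hcr, hr⟩) (hint ⟨hc, hcr.trans hr⟩)]
  rw [← abs_of_nonneg (sub_nonneg.2 hcr)]
  exact norm_integral_le_of_norm_le_const fun s hs =>
    hM s (by rw [uIoc_of_le hcr] at hs; exact ⟨hc.trans hs.1.le, hs.2.trans hr⟩)

end IsHamiltonianFlow

end HamiltonianFlow

section Comparison

variable {E : Type*} [NormedAddCommGroup E] [NormedSpace ℝ E] [CompleteSpace E]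
  {G : E → E} {h L : ℝ} {q w Q V : ℝ → E} {x v : E}

theorem verletVelocity_sub_velocity_eq (hV : IsVerletInterpolation G h x v q w)
    (hF : IsHamiltonianFlow G x v Q V) (hh : 0 < h) {s a : ℝ} (hs : 0 ≤ s)
    (ha : gridFloor h s = a) (hGQ : IntervalIntegrable (fun r => G (Q r)) volume 0 s)
    (hGq : IntervalIntegrable (fun r => G (q r)) volume 0 s) :
    verletVelocity G h q w s - V s
      = (∫ r in 0..a, (G (Q r) - G (q r)))
        + ((∫ r in 0..a, G (q r)) - (1 / 2 : ℝ) • ∫ r in 0..a, verletForceSum G h q r)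
        + (∫ r in a..s, (G (Q r) - G (Q a))) + (s - a) • (G (Q a) - G (q a)) := by
  have ha0 : 0 ≤ a := ha ▸ gridFloor_nonneg hh hs
  have has : a ≤ s := ha ▸ gridFloor_le hh s
  have hsub {f : ℝ → E} (hf : IntervalIntegrable f volume 0 s) {b c : ℝ} (hb : 0 ≤ b)
      (hbc : b ≤ c) (hc : c ≤ s) : IntervalIntegrable f volume b c :=
    hf.mono_set (by rw [uIcc_of_le hbc, uIcc_of_le hs]; exact Icc_subset_Icc hb hc)
  rw [verletVelocity, ha, hV.velocity_eq, hF.velocity_eq,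
    ← integral_add_adjacent_intervals (hsub hGQ le_rfl ha0 has) (hsub hGQ ha0 has le_rfl),
    integral_sub (hsub hGQ le_rfl ha0 has) (hsub hGq le_rfl ha0 has),
    integral_sub (hsub hGQ ha0 has le_rfl) intervalIntegrable_const,
    intervalIntegral.integral_const]
  module

theorem norm_velocity_sub_verletVelocity_le (hV : IsVerletInterpolation G h x v q w)
    (hF : IsHamiltonianFlow G x v Q V) (hh : 0 < h)
    (hGlip : ∀ y z, ‖G y - G z‖ ≤ L * ‖y - z‖) (hL0 : 0 ≤ L) {s T D M B : ℝ} (hs : s ∈ Icc 0 T)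
    (hGQ : IntervalIntegrable (fun r => G (Q r)) volume 0 s)
    (hGq : IntervalIntegrable (fun r => G (q r)) volume 0 s)
    (hD : ∀ r ∈ Icc 0 T, ‖Q r - q r‖ ≤ D) (hM0 : 0 ≤ M)
    (hQ : ∀ r ∈ Icc (gridFloor h s) s, ‖Q r - Q (gridFloor h s)‖ ≤ M * (r - gridFloor h s))
    (htrap : ‖(∫ r in 0..gridFloor h s, G (q r))
      - (1 / 2 : ℝ) • ∫ r in 0..gridFloor h s, verletForceSum G h q r‖ ≤ B) :
    ‖V s - verletVelocity G h q w s‖ ≤ L * M * h ^ 2 / 2 + B + L * (T + h) * D := by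
  set a := gridFloor h s with ha
  have ha0 : 0 ≤ a := gridFloor_nonneg hh hs.1
  have has : a ≤ s := gridFloor_le hh s
  have hsa : s - a ≤ h := (sub_gridFloor_lt hh s).le
  have hGD : ∀ r ∈ Icc 0 T, ‖G (Q r) - G (q r)‖ ≤ L * D := fun r hr =>
    (hGlip _ _).trans (mul_le_mul_of_nonneg_left (hD r hr) hL0)
  have hLD : 0 ≤ L * D := (norm_nonneg _).trans (hGD 0 ⟨le_rfl, hs.1.trans hs.2⟩)
  have hfeedback : ‖∫ r in 0..a, (G (Q r) - G (q r))‖ ≤ L * D * T := by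
    refine (norm_integral_le_of_norm_le_const fun r hr => hGD r ?_).trans ?_
    · rw [uIoc_of_le ha0] at hr; exact ⟨hr.1.le, hr.2.trans (has.trans hs.2)⟩
    · rw [sub_zero, abs_of_nonneg ha0]; exact mul_le_mul_of_nonneg_left (has.trans hs.2) hLD
  have hsubstep : ‖∫ r in a..s, (G (Q r) - G (Q a))‖ ≤ L * M * h ^ 2 / 2 := by
    calc ‖∫ r in a..s, (G (Q r) - G (Q a))‖ ≤ ∫ r in a..s, L * M * (r - a) := by
          refine norm_integral_le_of_norm_le has (ae_of_all _ fun r hr => ?_)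
            (Continuous.intervalIntegrable (by fun_prop) _ _)
          calc _ ≤ L * ‖Q r - Q a‖ := hGlip _ _
            _ ≤ L * M * (r - a) := by
              rw [mul_assoc]; exact mul_le_mul_of_nonneg_left (hQ r (Ioc_subset_Icc_self hr)) hL0
      _ = L * M * (s - a) ^ 2 / 2 := by
          rw [intervalIntegral.integral_const_mul, integral_comp_sub_right (fun r => r),
            integral_id]
          ring
      _ ≤ L * M * h ^ 2 / 2 := by gcongr
  have hlag : ‖(s - a) • (G (Q a) - G (q a))‖ ≤ h * (L * D) := by
    rw [norm_smul, Real.norm_of_nonneg (sub_nonneg.2 has)]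
    exact mul_le_mul hsa (hGD a ⟨ha0, has.trans hs.2⟩) (norm_nonneg _) hh.le
  rw [norm_sub_rev, verletVelocity_sub_velocity_eq hV hF hh hs.1 ha.symm hGQ hGq]
  calc _ ≤ _ := norm_add₄_le
    _ ≤ L * D * T + B + L * M * h ^ 2 / 2 + h * (L * D) := by gcongr
    _ = L * M * h ^ 2 / 2 + B + L * (T + h) * D := by ring

namespace IsHamiltonianFlow

theorem one_sub_mul_norm_sub_verlet_le (hF : IsHamiltonianFlow G x v Q V)
    (hV : IsVerletInterpolation G h x v q w) (hh : 0 < h)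
    (hGlip : ∀ y z, ‖G y - G z‖ ≤ L * ‖y - z‖) (hL0 : 0 ≤ L) {T M B : ℝ} (hT : 0 ≤ T)
    (hc : L * (T ^ 2 + T * h) ≤ 1) (hQc : ContinuousOn Q (Icc 0 T))
    (hVc : ContinuousOn V (Icc 0 T)) (hM : ∀ s ∈ Icc 0 T, ‖V s‖ ≤ M)
    (htrap : ∀ s ∈ Icc 0 T, ‖(∫ r in 0..gridFloor h s, G (q r))
      - (1 / 2 : ℝ) • ∫ r in 0..gridFloor h s, verletForceSum G h q r‖ ≤ B) :
    ∀ t ∈ Icc 0 T, (1 - L * (T ^ 2 + T * h)) * ‖Q t - q t‖ ≤ T * (L * M * h ^ 2 / 2 + B) := by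
  have hGc : Continuous G :=
    (LipschitzWith.of_dist_le' fun y z => by simpa only [dist_eq_norm] using hGlip y z).continuous
  have hqc := hV.continuousOn hh hT
  have hM0 : 0 ≤ M := (norm_nonneg _).trans (hM 0 (left_mem_Icc.2 hT))
  have hB0 : 0 ≤ B := (norm_nonneg _).trans (htrap 0 (left_mem_Icc.2 hT))
  have hint {f : ℝ → E} (hf : ContinuousOn f (Icc 0 T)) {s : ℝ} (hs : s ∈ Icc 0 T) :
      IntervalIntegrable f volume 0 s :=
    (hf.mono (Icc_subset_Icc_right hs.2)).intervalIntegrable_of_Icc hs.1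
  refine isCompact_Icc.one_sub_mul_le_of_isMaxOn (nonempty_Icc.2 hT) (hQc.sub hqc).norm hc
    fun t ht hmax => ?_
  have hbound : ∀ s ∈ uIoc 0 t, ‖V s - verletVelocity G h q w s‖
      ≤ L * M * h ^ 2 / 2 + B + L * (T + h) * ‖Q t - q t‖ := fun s hs => by
    rw [uIoc_of_le ht.1] at hs
    have hs' : s ∈ Icc 0 T := ⟨hs.1.le, hs.2.trans ht.2⟩
    exact norm_velocity_sub_verletVelocity_le hV hF hh hGlip hL0 hs'
      (hint (hGc.comp_continuousOn hQc) hs') (hint (hGc.comp_continuousOn hqc) hs')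
      (fun r hr => hmax hr) hM0
      (fun r hr => hF.norm_sub_le_of_norm_velocity_le hVc hM (gridFloor_nonneg hh hs'.1) hr.1
        (hr.2.trans hs'.2))
      (htrap s hs')
  have hE := norm_integral_le_of_norm_le_const hbound
  rw [integral_sub (hint hVc ht) (intervalIntegrable_verletVelocity hh ht.1),
    ← add_sub_add_left_eq_sub _ _ x, ← hF.position_eq, ← hV.position_eq, sub_zero,
    abs_of_nonneg ht.1] at hE
  have hA : 0 ≤ L * M * h ^ 2 / 2 + B + L * (T + h) * ‖Q t - q t‖ := by positivity
  calc ‖Q t - q t‖ ≤ (L * M * h ^ 2 / 2 + B + L * (T + h) * ‖Q t - q t‖) * T :=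
        hE.trans (mul_le_mul_of_nonneg_left ht.2 hA)
    _ = T * (L * M * h ^ 2 / 2 + B) + L * (T ^ 2 + T * h) * ‖Q t - q t‖ := by ring

theorem norm_sub_verlet_le (hF : IsHamiltonianFlow G x v Q V)
    (hV : IsVerletInterpolation G h x v q w) (hh : 0 < h) {DG : E → E →L[ℝ] E} {LH T P M : ℝ}
    {N : ℕ} (hDG : ∀ y, HasFDerivAt G (DG y) y) (hL : ∀ y, ‖DG y‖ ≤ L)
    (hLH : ∀ y z, ‖DG y - DG z‖ ≤ LH * ‖y - z‖) (hLH0 : 0 ≤ LH) (hG0 : G 0 = 0)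
    (hTN : T = N * h) (hsmall : L * (T ^ 2 + T * h) ≤ 1 / 6)
    (hP : 6 / 5 * (‖x‖ + T * ‖v‖) ≤ P) (hM : ‖v‖ + L * T * P ≤ M) :
    ∀ t ∈ Icc 0 T,
      ‖Q t - q t‖ ≤ 6 / 5 * h ^ 2 * (L * T * M / 2 + (LH * M ^ 2 + L * (L * P)) * T ^ 2 / 12) := by
  have hGlip : ∀ y z, ‖G y - G z‖ ≤ L * ‖y - z‖ := fun y z =>
    convex_univ.norm_image_sub_le_of_norm_hasFDerivWithin_le
      (fun y _ => (hDG y).hasFDerivWithinAt) (fun y _ => hL y) (mem_univ z) (mem_univ y)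
  have hG : ∀ y, ‖G y‖ ≤ L * ‖y‖ := fun y => by simpa [hG0] using hGlip y 0
  have hL0 : 0 ≤ L := (norm_nonneg _).trans (hL 0)
  have hT : 0 ≤ T := hTN ▸ by positivity
  have hLT : L * T ^ 2 ≤ 1 / 6 := by nlinarith [mul_nonneg (mul_nonneg hL0 hT) hh.le]
  have hqP : ∀ r ∈ Icc 0 T, ‖q r‖ ≤ P := fun r hr => hP.trans' <|
    le_six_fifths_mul_of_one_sub_mul_le hLT (norm_nonneg _)
      (hV.one_sub_mul_norm_le hh hG hL0 hTN (by linarith) r hr)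
  obtain ⟨hQc, hVc⟩ := hF.continuousOn (continuous_iff_continuousAt.2 fun y => (hDG y).continuousAt)
    hG hL0 hT (by linarith)
  have hQP : ∀ r ∈ Icc 0 T, ‖Q r‖ ≤ P := fun r hr => hP.trans' <|
    le_six_fifths_mul_of_one_sub_mul_le hLT (norm_nonneg _)
      (hF.one_sub_mul_norm_le hG hL0 hT le_rfl (by linarith) hQc r hr)
  have hP0 : 0 ≤ P := (norm_nonneg _).trans (hqP 0 (left_mem_Icc.2 hT))
  have hVM : ∀ s ∈ Icc 0 T, ‖V s‖ ≤ M := fun s hs =>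
    (hF.norm_velocity_le hG hL0 hs.1 fun r hr => hQP r ⟨hr.1, hr.2.trans hs.2⟩).trans
      (by nlinarith [mul_le_mul_of_nonneg_left hs.2 (mul_nonneg hL0 hP0)])
  have hwM {a r : ℝ} (ha : 0 ≤ a) (har : a ≤ r) (hr : r ≤ T) : ‖w a - (r - a) • G (q a)‖ ≤ M :=
    (hV.norm_sub_smul_le hh hG hL0 hTN hqP ha har hr).trans
      (by nlinarith [mul_le_mul_of_nonneg_left hr (mul_nonneg hL0 hP0)])
  have htrap {s : ℝ} (hs : s ∈ Icc 0 T) :=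
    hV.norm_integral_gridFloor_sub_half_integral_le hh hDG hL hLH hLH0 (fun a r => hwM)
      (fun r hr => (hG _).trans (mul_le_mul_of_nonneg_left (hqP r hr) hL0)) hs
  intro t ht
  refine (le_six_fifths_mul_of_one_sub_mul_le hsmall (norm_nonneg _)
    (hF.one_sub_mul_norm_sub_verlet_le hV hh hGlip hL0 hT (by linarith) hQc hVc hVM
      (fun s => htrap) t ht)).trans_eq ?_
  ring

end IsHamiltonianFlow

end Comparison

theorem verlet_error_constant_le {L LH T X V P M : ℝ} (hL0 : 0 ≤ L) (hLH0 : 0 ≤ LH)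
    (hT : 0 ≤ T) (hX : 0 ≤ X) (hV : 0 ≤ V) (hLT : L * T ^ 2 ≤ 1 / 6)
    (hP : P = 6 / 5 * (X + T * V)) (hM : M = V + L * T * P) :
    6 / 5 * (L * T * M / 2 + (LH * M ^ 2 + L * (L * P)) * T ^ 2 / 12)
      ≤ 7 / 45 * L * X + 1547 / 1800 * L * T * V + 1 / 120 * LH * X ^ 2
        + 3 / 10 * LH * T ^ 2 * V ^ 2 := by
  have hLT0 : 0 ≤ L * T := mul_nonneg hL0 hT
  have hTM : T * M ≤ 6 / 5 * (T * V + X / 6) := by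
    rw [hM, hP]
    nlinarith [mul_le_mul_of_nonneg_right hLT (mul_nonneg hT hV), mul_le_mul_of_nonneg_right hLT hX]
  have hsq : (T * M) ^ 2 ≤ 72 / 25 * (T * V) ^ 2 + 2 / 25 * X ^ 2 := by
    nlinarith [pow_le_pow_left₀ (by rw [hM, hP]; positivity) hTM 2, sq_nonneg (T * V - X / 6)]
  have hkick : L * T * M ≤ 6 / 5 * (L * T * V) + 1 / 5 * (L * X) := by
    rw [hM, hP]
    nlinarith [mul_le_mul_of_nonneg_right hLT (mul_nonneg hL0 hX),
      mul_le_mul_of_nonneg_right hLT (mul_nonneg hLT0 hV)]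
  have hcurv : L * (L * P) * T ^ 2 ≤ 1 / 5 * (L * X + L * T * V) := by
    rw [hP]
    nlinarith [mul_le_mul_of_nonneg_right hLT (mul_nonneg hL0 hX),
      mul_le_mul_of_nonneg_right hLT (mul_nonneg hLT0 hV)]
  nlinarith [mul_le_mul_of_nonneg_left hsq hLH0, mul_nonneg hL0 hX, mul_nonneg hLT0 hV,
    mul_nonneg hLH0 (sq_nonneg X), mul_nonneg hLH0 (sq_nonneg (T * V))]

theorem verlet_strong_error_general {d : ℕ}
    (U : EuclideanSpace ℝ (Fin d) → ℝ)
    (gradU : EuclideanSpace ℝ (Fin d) → EuclideanSpace ℝ (Fin d))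
    (hess : EuclideanSpace ℝ (Fin d) →
      (EuclideanSpace ℝ (Fin d) →L[ℝ] EuclideanSpace ℝ (Fin d)))
    (L LH T h : ℝ) (N : ℕ)
    (hmin : ∀ x, U 0 ≤ U x)
    (hgrad : ∀ x, HasFDerivAt U ((innerSL ℝ) (gradU x)) x)
    (hhess : ∀ x, HasFDerivAt gradU (hess x) x)
    (hL : ∀ x, ‖hess x‖ ≤ L)
    (hLH : ∀ x y, ‖hess x - hess y‖ ≤ LH * ‖x - y‖)
    (hT : 0 < T) (hh : 0 < h) (hTh : T = N * h)
    (hsmall : L * (T^2 + T * h) ≤ 1/6)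
    -- velocity Verlet interpolation
    (q w : EuclideanSpace ℝ (Fin d) → EuclideanSpace ℝ (Fin d) → ℝ →
      EuclideanSpace ℝ (Fin d))
    (hq : ∀ x v t, q x v t = x + ∫ s in (0:ℝ)..t,
      (w x v (gridFloor h s) - (s - gridFloor h s) • gradU (q x v (gridFloor h s))))
    (hw : ∀ x v t, w x v t = v - (1/2 : ℝ) • ∫ s in (0:ℝ)..t,
      (gradU (q x v (gridFloor h s)) + gradU (q x v (gridCeil h s))))
    -- exact Hamiltonian flow
    (Q Vel : EuclideanSpace ℝ (Fin d) → EuclideanSpace ℝ (Fin d) → ℝ →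
      EuclideanSpace ℝ (Fin d))
    (hQ : ∀ x v t, Q x v t = x + ∫ s in (0:ℝ)..t, Vel x v s)
    (hVel : ∀ x v t, Vel x v t = v - ∫ s in (0:ℝ)..t, gradU (Q x v s))
    (x v : EuclideanSpace ℝ (Fin d)) :
    ∀ s ∈ Set.Icc (0:ℝ) T,
      ‖Q x v s - q x v s‖ ≤ h^2 *
        ((7/45) * L * ‖x‖ + (1547/1800) * L * T * ‖v‖ +
          (1/120) * LH * ‖x‖^2 + (3/10) * LH * T^2 * ‖v‖^2) := by
  rcases subsingleton_or_nontrivial (EuclideanSpace ℝ (Fin d)) with hE | hE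
  · intro s _
    rw [Subsingleton.elim (Q x v s - q x v s) 0, Subsingleton.elim x 0, Subsingleton.elim v 0]
    simp
  have hL0 : 0 ≤ L := (norm_nonneg _).trans (hL 0)
  have hLH0 : 0 ≤ LH := nonneg_of_norm_sub_le_mul_norm_sub hLH
  have hgrad0 : gradU 0 = 0 :=
    IsLocalMin.eq_zero_of_hasFDerivAt_innerSL (Filter.Eventually.of_forall hmin) (hgrad 0)
  intro s hs
  refine (IsHamiltonianFlow.norm_sub_verlet_le ⟨hQ x v, hVel x v⟩ ⟨hq x v, hw x v⟩ hh hhess hL hLH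
    hLH0 hgrad0 hTh hsmall le_rfl le_rfl s hs).trans ?_
  rw [mul_comm (6 / 5 : ℝ), mul_assoc]
  exact mul_le_mul_of_nonneg_left (verlet_error_constant_le hL0 hLH0 hT.le (norm_nonneg _)
    (norm_nonneg _) (by nlinarith [mul_nonneg (mul_nonneg hL0 hT.le) hh.le]) rfl rfl) (sq_nonneg h)

/-- Strong discretization error of velocity Verlet relative to the exact
Hamiltonian flow (Lemma `verlet_error:1`). -/
theorem verlet_strong_error {d : ℕ}
    (U : EuclideanSpace ℝ (Fin d) → ℝ)
    (gradU : EuclideanSpace ℝ (Fin d) → EuclideanSpace ℝ (Fin d))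
    (hess : EuclideanSpace ℝ (Fin d) →
      (EuclideanSpace ℝ (Fin d) →L[ℝ] EuclideanSpace ℝ (Fin d)))
    (L LH T h : ℝ) (N : ℕ)
    (hmin : ∀ x, U 0 ≤ U x) (hU0 : U 0 = 0)
    (hgrad : ∀ x, HasFDerivAt U ((innerSL ℝ) (gradU x)) x)
    (hhess : ∀ x, HasFDerivAt gradU (hess x) x)
    (hL : ∀ x, ‖hess x‖ ≤ L)
    (hLH : ∀ x y, ‖hess x - hess y‖ ≤ LH * ‖x - y‖)
    (hT : 0 < T) (hh : 0 < h) (hN : 0 < N) (hTh : T = N * h)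
    (hsmall : L * (T^2 + T * h) ≤ 1/6)
    -- velocity Verlet interpolation
    (q w : EuclideanSpace ℝ (Fin d) → EuclideanSpace ℝ (Fin d) → ℝ →
      EuclideanSpace ℝ (Fin d))
    (hq : ∀ x v t, q x v t = x + ∫ s in (0:ℝ)..t,
      (w x v (gridFloor h s) - (s - gridFloor h s) • gradU (q x v (gridFloor h s))))
    (hw : ∀ x v t, w x v t = v - (1/2 : ℝ) • ∫ s in (0:ℝ)..t,
      (gradU (q x v (gridFloor h s)) + gradU (q x v (gridCeil h s))))
    -- exact Hamiltonian flow
    (Q Vel : EuclideanSpace ℝ (Fin d) → EuclideanSpace ℝ (Fin d) → ℝ →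
      EuclideanSpace ℝ (Fin d))
    (hQ : ∀ x v t, Q x v t = x + ∫ s in (0:ℝ)..t, Vel x v s)
    (hVel : ∀ x v t, Vel x v t = v - ∫ s in (0:ℝ)..t, gradU (Q x v s))
    (x v : EuclideanSpace ℝ (Fin d)) :
    ∀ s ∈ Set.Icc (0:ℝ) T,
      ‖Q x v s - q x v s‖ ≤ h^2 *
        ((7/45) * L * ‖x‖ + (1547/1800) * L * T * ‖v‖ +
          (1/120) * LH * ‖x‖^2 + (3/10) * LH * T^2 * ‖v‖^2) :=
  verlet_strong_error_general U gradU hess L LH T h N hmin hgrad hhess hL hLH hT hh hTh hsmall q w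
    hq hw Q Vel hQ hVel x v
end
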